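/- arXiv:2512.08176 — 3 statements merged into one kernel-verified Lean document; each statement's English description precedes it below -/
import Mathlib

section
/- Under the μ-PL-in-T assumption, for every θ ∈ ℝ^p and T ∈ L²(P), ‖∂_θL(θ,T) − ∂φ(θ)‖ ≤ κ ‖∂_TL(θ,T)‖_{L²(P)}, where κ = l/μ and ∂φ(θ) = ∂_θL(θ,T*(θ)). -/
/-!
For fixed `θ` and `x`, the function `h = h(θ, ·; x)` has a Lipschitz gradient and satisfies the
PL inequality, so gradient ascent from any `v` with a small step `η` increases `h` by at least
`η (1 - L η) ‖∇h‖²` per step. By Łojasiewicz's argument each step is then no longer than a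
multiple of the decrease of `√(h* - h)`, so the iterates converge, within distance
`‖∇h(v)‖ / (μ (1 - L η))` of `v`, to a critical point, which by PL is the unique maximiser `v*`.
Letting `η → 0` gives the error bound `μ ‖v - v*‖ ≤ ‖∇h(v)‖`. As `∂_θℓ(θ, ·)` is `l₀`-Lipschitz,
`‖∂_θℓ(θ, T x) - ∂_θℓ(θ, v*(θ; x))‖ ≤ (l₀ / μ) ‖∂_T L(θ, T)(x)‖`; integrating and applying
Cauchy–Schwarz on the probability space `P` gives the claim.
-/

open MeasureTheory InnerProductSpace Filter Topology
open scoped NNReal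

theorem mul_le_two_mul_sqrt_sub_sqrt {a b c σ t : ℝ} (hb : 0 ≤ b) (hc : 0 ≤ c) (hσ : 0 ≤ σ)
    (hdecr : b + c * t ^ 2 ≤ a) (hgrowth : σ * √a ≤ t) : c * σ * t ≤ 2 * (√a - √b) := by
  obtain ⟨A, hA, rfl⟩ : ∃ A, 0 ≤ A ∧ a = A ^ 2 :=
    ⟨√a, Real.sqrt_nonneg _, (Real.sq_sqrt (by nlinarith)).symm⟩
  obtain ⟨B, hB, rfl⟩ : ∃ B, 0 ≤ B ∧ b = B ^ 2 :=
    ⟨√b, Real.sqrt_nonneg _, (Real.sq_sqrt hb).symm⟩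
  rw [Real.sqrt_sq hA, Real.sqrt_sq hB] at *
  have ht : 0 ≤ t := le_trans (by positivity) hgrowth
  have hBA : B ≤ A := by nlinarith
  -- `c σ t √a ≤ c t² ≤ a - b ≤ 2 √a (√a - √b)`
  rcases hA.eq_or_lt with rfl | hApos
  · have hct : c * t = 0 := by
      nlinarith [mul_nonneg hc ht, mul_nonneg (mul_nonneg hc ht) (mul_nonneg hc ht)]
    nlinarith
  · refine le_of_mul_le_mul_right ?_ hApos
    nlinarith [mul_le_mul_of_nonneg_left hgrowth (mul_nonneg hc ht)]

theorem sqrt_two_mul_mul_sqrt_le {a t μ : ℝ} (ha : 0 ≤ a) (h : μ * a ≤ 1 / 2 * t ^ 2) (ht : 0 ≤ t) :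
    √(2 * μ) * √a ≤ t := by
  rw [← Real.sqrt_mul' _ ha, Real.sqrt_le_left ht]
  linarith

theorem dist_le_sub_of_dist_succ_le_sub {α : Type*} [PseudoMetricSpace α] {u : ℕ → α} {a : ℕ → ℝ}
    (h : ∀ k, dist (u k) (u (k + 1)) ≤ a k - a (k + 1)) (n : ℕ) : dist (u 0) (u n) ≤ a 0 - a n :=
  (dist_le_range_sum_dist u n).trans
    ((Finset.sum_le_sum fun k _ => h k).trans_eq (Finset.sum_range_sub' a n))

theorem cauchySeq_of_dist_succ_le_sub {α : Type*} [PseudoMetricSpace α] {u : ℕ → α} {a : ℕ → ℝ}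
    (ha : ∀ k, 0 ≤ a k) (h : ∀ k, dist (u k) (u (k + 1)) ≤ a k - a (k + 1)) : CauchySeq u := by
  refine cauchySeq_of_dist_le_of_summable _ h
    (summable_of_sum_range_le (c := a 0) (fun k => dist_nonneg.trans (h k)) fun n => ?_)
  rw [Finset.sum_range_sub']
  linarith [ha n]

section ErrorBound

variable {E : Type*} [NormedAddCommGroup E] [InnerProductSpace ℝ E] [CompleteSpace E]

theorem HasGradientAt.sub_norm_sub_sq_div {f : E → ℝ} {a v : E} (hf : HasGradientAt f a v)
    (x : E) (c : ℝ) :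
    HasGradientAt (fun w => f w - ‖w - x‖ ^ 2 / (2 * c)) (a - c⁻¹ • (v - x)) v := by
  simp_rw [div_eq_inv_mul]
  rw [hasGradientAt_iff_hasFDerivAt] at hf ⊢
  refine (hf.sub (((hasFDerivAt_id v).sub_const x).norm_sq.const_mul (2 * c)⁻¹)).congr_fderiv ?_
  ext w
  simp only [map_sub, map_smul, toDual_apply_apply, sub_apply, smul_apply,
    ContinuousLinearMap.comp_apply, innerSL_apply_apply, ContinuousLinearMap.id_apply, id_eq,
    smul_eq_mul, nsmul_eq_mul]
  push_cast
  ring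

variable {f : E → ℝ} {g : E → E} {L : ℝ≥0}

theorem abs_sub_sub_inner_le_of_lipschitzWith (hf : ∀ z, HasGradientAt f (g z) z)
    (hg : LipschitzWith L g) (u w : E) :
    |f u - f w - ⟪g w, u - w⟫_ℝ| ≤ L * ‖u - w‖ ^ 2 := by
  have hderiv : ∀ z ∈ Metric.closedBall w ‖u - w‖,
      ‖toDual ℝ E (g z) - toDual ℝ E (g w)‖ ≤ L * ‖u - w‖ := fun z hz => by
    rw [← map_sub, LinearIsometryEquiv.norm_map]
    exact (hg.norm_sub_le z w).trans (by gcongr; exact mem_closedBall_iff_norm.mp hz)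
  have := (convex_closedBall w ‖u - w‖).norm_image_sub_le_of_norm_hasFDerivWithin_le'
    (fun z _ => (hf z).hasFDerivAt.hasFDerivWithinAt) hderiv
    (Metric.mem_closedBall_self (norm_nonneg _)) (mem_closedBall_iff_norm.mpr le_rfl)
  rw [toDual_apply_apply] at this
  rw [← Real.norm_eq_abs]
  linarith

theorem le_apply_add_smul_of_lipschitzWith (hf : ∀ z, HasGradientAt f (g z) z)
    (hg : LipschitzWith L g) (z : E) (η : ℝ) :
    f z + η * (1 - L * η) * ‖g z‖ ^ 2 ≤ f (z + η • g z) := by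
  have h := abs_sub_sub_inner_le_of_lipschitzWith hf hg (z + η • g z) z
  rw [add_sub_cancel_left, real_inner_smul_right, real_inner_self_eq_norm_sq, norm_smul,
    mul_pow, Real.norm_eq_abs, sq_abs] at h
  linarith [(abs_le.mp h).1]

variable {μ : ℝ} {vs : E}

theorem mul_dist_add_smul_le_sqrt_sub_sqrt (hf : ∀ z, HasGradientAt f (g z) z)
    (hg : LipschitzWith L g) (hmax : ∀ w, f w ≤ f vs)
    (hpl : ∀ z, μ * (f vs - f z) ≤ 1 / 2 * ‖g z‖ ^ 2) {η : ℝ} (hη : 0 ≤ η) (hLη : L * η ≤ 1)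
    (z : E) :
    (1 - L * η) * √(2 * μ) * dist z (z + η • g z)
      ≤ 2 * (√(f vs - f z) - √(f vs - f (z + η • g z))) := by
  rw [dist_self_add_right, norm_smul, Real.norm_of_nonneg hη]
  calc _ = η * (1 - L * η) * √(2 * μ) * ‖g z‖ := by ring
    _ ≤ _ := mul_le_two_mul_sqrt_sub_sqrt (sub_nonneg.mpr (hmax _))
        (mul_nonneg hη (sub_nonneg.mpr hLη)) (Real.sqrt_nonneg _)
        (by linarith [le_apply_add_smul_of_lipschitzWith hf hg z η])
        (sqrt_two_mul_mul_sqrt_le (sub_nonneg.mpr (hmax z)) (hpl z) (norm_nonneg _))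

theorem mul_one_sub_mul_norm_sub_le_norm_of_pl (hf : ∀ z, HasGradientAt f (g z) z)
    (hg : LipschitzWith L g) (hmax : ∀ w, f w ≤ f vs) (huniq : ∀ z, (∀ w, f w ≤ f z) → z = vs)
    (hpl : ∀ z, μ * (f vs - f z) ≤ 1 / 2 * ‖g z‖ ^ 2) (hμ : 0 < μ) {η : ℝ} (hη : 0 < η)
    (hLη : L * η < 1) (v : E) :
    μ * (1 - L * η) * ‖v - vs‖ ≤ ‖g v‖ := by
  set F : E → E := fun z => z + η • g z
  set s : E → ℝ := fun z => √(f vs - f z)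
  set C := 2 / ((1 - L * η) * √(2 * μ))
  have hC : 0 < (1 - L * η) * √(2 * μ) := mul_pos (by linarith) (by positivity)
  have hstep : ∀ k, dist (F^[k] v) (F^[k + 1] v) ≤ C * s (F^[k] v) - C * s (F^[k + 1] v) := by
    intro k
    rw [Function.iterate_succ_apply', ← mul_sub, div_mul_eq_mul_div, le_div_iff₀' hC]
    exact mul_dist_add_smul_le_sqrt_sub_sqrt hf hg hmax hpl hη.le hLη.le _
  obtain ⟨w, hw⟩ := cauchySeq_tendsto_of_complete
    (cauchySeq_of_dist_succ_le_sub (fun k => by positivity) hstep)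
  have hgw : g w = 0 := by
    have hfix := isFixedPt_of_tendsto_iterate hw
      (continuous_id.add (continuous_const.smul hg.continuous)).continuousAt
    simpa [F, Function.IsFixedPt, hη.ne'] using hfix
  have hw_eq : w = vs := by
    have hpl_w := hpl w
    rw [hgw, norm_zero] at hpl_w
    have hw_max : f vs ≤ f w := by nlinarith
    exact huniq w fun z => (hmax z).trans hw_max
  have hdist : dist v w ≤ C * s v := by
    refine le_of_tendsto (tendsto_const_nhds.dist hw) (Eventually.of_forall fun n => ?_)
    have htele := dist_le_sub_of_dist_succ_le_sub hstep n
    have hs_nonneg : 0 ≤ C * s (F^[n] v) := by positivity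
    rw [Function.iterate_zero_apply] at htele
    linarith
  calc μ * (1 - L * η) * ‖v - vs‖ = μ * (1 - L * η) * dist v w := by rw [hw_eq, dist_eq_norm]
    _ ≤ μ * (1 - L * η) * (C * s v) := by gcongr
    _ = √(2 * μ) * s v := by
      have hsq := Real.sq_sqrt (by positivity : (0:ℝ) ≤ 2 * μ)
      have hq : 1 - (L : ℝ) * η ≠ 0 := by linarith
      have hσ : √(2 * μ) ≠ 0 := by positivity
      simp only [C]
      generalize √(2 * μ) = σ at hsq hσ ⊢
      field_simp
      linear_combination (-s v) * hsq
    _ ≤ ‖g v‖ := sqrt_two_mul_mul_sqrt_le (sub_nonneg.mpr (hmax v)) (hpl v) (norm_nonneg _)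

theorem mul_norm_sub_le_norm_of_pl (hf : ∀ z, HasGradientAt f (g z) z)
    (hg : LipschitzWith L g) (hmax : ∀ w, f w ≤ f vs) (huniq : ∀ z, (∀ w, f w ≤ f z) → z = vs)
    (hpl : ∀ z, μ * (f vs - f z) ≤ 1 / 2 * ‖g z‖ ^ 2) (hμ : 0 < μ) (v : E) :
    μ * ‖v - vs‖ ≤ ‖g v‖ := by
  have hcont : Continuous fun η : ℝ => μ * (1 - L * η) * ‖v - vs‖ := by fun_prop
  have hsmall : ∀ᶠ η : ℝ in 𝓝 0, L * η < 1 :=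
    ((continuous_const.mul continuous_id).tendsto' 0 0 (by simp)).eventually
      (eventually_lt_nhds one_pos)
  have hlim : Tendsto (fun η : ℝ => μ * (1 - L * η) * ‖v - vs‖) (𝓝[>] 0) (𝓝 (μ * ‖v - vs‖)) := by
    simpa using (hcont.tendsto 0).mono_left nhdsWithin_le_nhds
  refine le_of_tendsto hlim ?_
  filter_upwards [self_mem_nhdsWithin, nhdsWithin_le_nhds hsmall] with η hη hLη
  exact mul_one_sub_mul_norm_sub_le_norm_of_pl hf hg hmax huniq hpl hμ hη hLη v

end ErrorBound

theorem LipschitzWith.comp_memLp_of_isFiniteMeasure {α E F : Type*} [MeasurableSpace α]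
    {μ : Measure α} [IsFiniteMeasure μ] [NormedAddCommGroup E] [NormedAddCommGroup F]
    {K : ℝ≥0} {p : ENNReal} {f : α → E} {g : E → F} (hg : LipschitzWith K g) (hf : MemLp f p μ) :
    MemLp (g ∘ f) p μ := by
  have hg0 : LipschitzWith K fun y => g y - g 0 := by
    simpa using hg.sub (LipschitzWith.const (g 0))
  convert (hg0.comp_memLp (sub_self _) hf).add (memLp_const (g 0)) using 1
  ext
  simp

theorem integral_norm_le_sqrt_integral_norm_sq {α E : Type*} [MeasurableSpace α] {μ : Measure α}
    [IsProbabilityMeasure μ] [NormedAddCommGroup E] {G : α → E} (hG : MemLp G 2 μ) :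
    ∫ x, ‖G x‖ ∂μ ≤ √(∫ x, ‖G x‖ ^ 2 ∂μ) := by
  have hvar := ProbabilityTheory.variance_nonneg (fun x => ‖G x‖) μ
  rw [ProbabilityTheory.variance_eq_sub hG.norm] at hvar
  rw [Real.le_sqrt (integral_nonneg fun x => norm_nonneg _)
    (integral_nonneg fun x => sq_nonneg _)]
  simpa using hvar

theorem norm_integral_sub_le_mul_sqrt_integral_norm_sq {α E F : Type*} [MeasurableSpace α]
    {μ : Measure α} [IsProbabilityMeasure μ] [NormedAddCommGroup E] [NormedSpace ℝ E]
    [NormedAddCommGroup F] {f h : α → E} {G : α → F} {c : ℝ} (hf : Integrable f μ)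
    (hh : Integrable h μ) (hG : MemLp G 2 μ) (hc : 0 ≤ c)
    (hbound : ∀ᵐ x ∂μ, ‖f x - h x‖ ≤ c * ‖G x‖) :
    ‖∫ x, f x ∂μ - ∫ x, h x ∂μ‖ ≤ c * √(∫ x, ‖G x‖ ^ 2 ∂μ) := by
  rw [← integral_sub hf hh]
  calc ‖∫ x, f x - h x ∂μ‖ ≤ ∫ x, ‖f x - h x‖ ∂μ := norm_integral_le_integral_norm _
    _ ≤ ∫ x, c * ‖G x‖ ∂μ :=
        integral_mono_ae (hf.sub hh).norm ((hG.integrable one_le_two).norm.const_mul c) hbound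
    _ = c * ∫ x, ‖G x‖ ∂μ := integral_const_mul _ _
    _ ≤ c * √(∫ x, ‖G x‖ ^ 2 ∂μ) := by gcongr; exact integral_norm_le_sqrt_integral_norm_sq hG

theorem lipschitzWith_of_sqrt_norm_sq_add_norm_sq_le {X Y Z W : Type*} [SeminormedAddCommGroup X]
    [SeminormedAddCommGroup Y] [SeminormedAddCommGroup Z] [SeminormedAddCommGroup W]
    {F : X → Y → Z} {G : X → Y → W} {K : ℝ}
    (h : ∀ θ v θ' v', √(‖F θ' v' - F θ v‖ ^ 2 + ‖G θ' v' - G θ v‖ ^ 2)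
      ≤ K * √(‖θ' - θ‖ ^ 2 + ‖v' - v‖ ^ 2)) (θ : X) :
    LipschitzWith K.toNNReal (F θ) ∧ LipschitzWith K.toNNReal (G θ) := by
  have hθ : ∀ v v', √(‖F θ v' - F θ v‖ ^ 2 + ‖G θ v' - G θ v‖ ^ 2) ≤ K * dist v' v := by
    intro v v'
    simpa [dist_eq_norm, Real.sqrt_sq (norm_nonneg _)] using h θ v θ v'
  exact ⟨.of_dist_le' fun v' v => (Real.le_sqrt_of_sq_le (by
      rw [dist_eq_norm]; exact le_add_of_nonneg_right (sq_nonneg _))).trans (hθ v v'),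
    .of_dist_le' fun v' v => (Real.le_sqrt_of_sq_le (by
      rw [dist_eq_norm]; exact le_add_of_nonneg_left (sq_nonneg _))).trans (hθ v v')⟩

theorem grad_theta_gap_bound_general
    {d p : ℕ} (P : Measure (EuclideanSpace ℝ (Fin d))) [IsProbabilityMeasure P]
    (hP2 : Integrable (fun x => ‖x‖ ^ 2) P)
    (ℓ : EuclideanSpace ℝ (Fin p) → EuclideanSpace ℝ (Fin d) → ℝ)
    (gθ : EuclideanSpace ℝ (Fin p) → EuclideanSpace ℝ (Fin d) → EuclideanSpace ℝ (Fin p))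
    (gv : EuclideanSpace ℝ (Fin p) → EuclideanSpace ℝ (Fin d) → EuclideanSpace ℝ (Fin d))
    (l₀ γ μ : ℝ) (hl₀ : 0 ≤ l₀) (hγ : 0 < γ) (hμ : 0 < μ)
    (hgv : ∀ θ v, HasGradientAt (fun v' => ℓ θ v') (gv θ v) v)
    (hsmooth : ∀ θ v θ' v',
      Real.sqrt (‖gθ θ' v' - gθ θ v‖ ^ 2 + ‖gv θ' v' - gv θ v‖ ^ 2)
        ≤ l₀ * Real.sqrt (‖θ' - θ‖ ^ 2 + ‖v' - v‖ ^ 2))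
    (vstar : EuclideanSpace ℝ (Fin p) → EuclideanSpace ℝ (Fin d) → EuclideanSpace ℝ (Fin d))
    (hmax : ∀ θ, ∀ᵐ x ∂P, ∀ v,
      ℓ θ v - ‖v - x‖ ^ 2 / (2 * γ) ≤ ℓ θ (vstar θ x) - ‖vstar θ x - x‖ ^ 2 / (2 * γ))
    (huniq : ∀ θ, ∀ᵐ x ∂P, ∀ v,
      (∀ w, ℓ θ w - ‖w - x‖ ^ 2 / (2 * γ) ≤ ℓ θ v - ‖v - x‖ ^ 2 / (2 * γ)) → v = vstar θ x)
    (hPL : ∀ θ, ∀ᵐ x ∂P, ∀ v,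
      μ * ((ℓ θ (vstar θ x) - ‖vstar θ x - x‖ ^ 2 / (2 * γ)) - (ℓ θ v - ‖v - x‖ ^ 2 / (2 * γ)))
        ≤ (1 / 2) * ‖gv θ v - γ⁻¹ • (v - x)‖ ^ 2)
    (hvstar : ∀ θ, MemLp (vstar θ) 2 P) :
    ∀ θ, ∀ T : EuclideanSpace ℝ (Fin d) → EuclideanSpace ℝ (Fin d), MemLp T 2 P →
      ‖(∫ x, gθ θ (T x) ∂P) - (∫ x, gθ θ (vstar θ x) ∂P)‖
        ≤ ((l₀ + γ⁻¹) / μ)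
            * Real.sqrt (∫ x, ‖gv θ (T x) - γ⁻¹ • (T x - x)‖ ^ 2 ∂P) := by
  intro θ T hT
  obtain ⟨hlipθ, hlipv⟩ := lipschitzWith_of_sqrt_norm_sq_add_norm_sq_le hsmooth θ
  have hEB : ∀ᵐ x ∂P, μ * ‖T x - vstar θ x‖ ≤ ‖gv θ (T x) - γ⁻¹ • (T x - x)‖ := by
    filter_upwards [hmax θ, huniq θ, hPL θ] with x hmaxx huniqx hplx
    exact mul_norm_sub_le_norm_of_pl (fun v => (hgv θ v).sub_norm_sub_sq_div x γ)
      (hlipv.sub ((lipschitzWith_smul γ⁻¹).comp (LipschitzWith.id.sub (LipschitzWith.const x))))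
      hmaxx huniqx hplx hμ (T x)
  have hid : MemLp id 2 P := (memLp_two_iff_integrable_sq_norm aestronglyMeasurable_id).mpr hP2
  refine norm_integral_sub_le_mul_sqrt_integral_norm_sq
    ((hlipθ.comp_memLp_of_isFiniteMeasure hT).integrable one_le_two)
    ((hlipθ.comp_memLp_of_isFiniteMeasure (hvstar θ)).integrable one_le_two)
    ((hlipv.comp_memLp_of_isFiniteMeasure hT).sub ((hT.sub hid).const_smul γ⁻¹))
    (by positivity) ?_
  filter_upwards [hEB] with x hx
  calc ‖gθ θ (T x) - gθ θ (vstar θ x)‖ ≤ l₀ * ‖T x - vstar θ x‖ := by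
        simpa [Real.coe_toNNReal _ hl₀] using hlipθ.norm_sub_le (T x) (vstar θ x)
    _ = l₀ / μ * (μ * ‖T x - vstar θ x‖) := by field_simp
    _ ≤ (l₀ + γ⁻¹) / μ * ‖gv θ (T x) - γ⁻¹ • (T x - x)‖ := by
        gcongr
        linarith [inv_pos.mpr hγ]

/-- Under the μ-PL-in-T assumption, for every `θ` and every
`T ∈ L²(P)`, `‖∂_θL(θ,T) − ∂φ(θ)‖ ≤ κ ‖∂_TL(θ,T)‖_{L²(P)}`, where `κ = l/μ`,
`l = l₀ + 1/γ`, and `∂φ(θ) = ∂_θL(θ,T*(θ)) = E_{x∼P}[∂_θℓ(θ,v*(θ;x))]`. -/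
theorem grad_theta_gap_bound
    {d p : ℕ} (P : Measure (EuclideanSpace ℝ (Fin d))) [IsProbabilityMeasure P]
    (hP2 : Integrable (fun x => ‖x‖ ^ 2) P)
    (ℓ : EuclideanSpace ℝ (Fin p) → EuclideanSpace ℝ (Fin d) → ℝ)
    (gθ : EuclideanSpace ℝ (Fin p) → EuclideanSpace ℝ (Fin d) → EuclideanSpace ℝ (Fin p))
    (gv : EuclideanSpace ℝ (Fin p) → EuclideanSpace ℝ (Fin d) → EuclideanSpace ℝ (Fin d))
    (l₀ γ μ : ℝ) (hl₀ : 0 ≤ l₀) (hγ : 0 < γ) (hμ : 0 < μ)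
    (hgθ : ∀ θ v, HasGradientAt (fun θ' => ℓ θ' v) (gθ θ v) θ)
    (hgv : ∀ θ v, HasGradientAt (fun v' => ℓ θ v') (gv θ v) v)
    (hsmooth : ∀ θ v θ' v',
      Real.sqrt (‖gθ θ' v' - gθ θ v‖ ^ 2 + ‖gv θ' v' - gv θ v‖ ^ 2)
        ≤ l₀ * Real.sqrt (‖θ' - θ‖ ^ 2 + ‖v' - v‖ ^ 2))
    (vstar : EuclideanSpace ℝ (Fin p) → EuclideanSpace ℝ (Fin d) → EuclideanSpace ℝ (Fin d))
    (hmax : ∀ θ, ∀ᵐ x ∂P, ∀ v,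
      ℓ θ v - ‖v - x‖ ^ 2 / (2 * γ) ≤ ℓ θ (vstar θ x) - ‖vstar θ x - x‖ ^ 2 / (2 * γ))
    (huniq : ∀ θ, ∀ᵐ x ∂P, ∀ v,
      (∀ w, ℓ θ w - ‖w - x‖ ^ 2 / (2 * γ) ≤ ℓ θ v - ‖v - x‖ ^ 2 / (2 * γ)) → v = vstar θ x)
    (hPL : ∀ θ, ∀ᵐ x ∂P, ∀ v,
      μ * ((ℓ θ (vstar θ x) - ‖vstar θ x - x‖ ^ 2 / (2 * γ)) - (ℓ θ v - ‖v - x‖ ^ 2 / (2 * γ)))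
        ≤ (1 / 2) * ‖gv θ v - γ⁻¹ • (v - x)‖ ^ 2)
    (hvstar : ∀ θ, MemLp (vstar θ) 2 P) :
    ∀ θ, ∀ T : EuclideanSpace ℝ (Fin d) → EuclideanSpace ℝ (Fin d), MemLp T 2 P →
      ‖(∫ x, gθ θ (T x) ∂P) - (∫ x, gθ θ (vstar θ x) ∂P)‖
        ≤ ((l₀ + γ⁻¹) / μ)
            * Real.sqrt (∫ x, ‖gv θ (T x) - γ⁻¹ • (T x - x)‖ ^ 2 ∂P) :=
  grad_theta_gap_bound_general P hP2 ℓ gθ gv l₀ γ μ hl₀ hγ hμ hgv hsmooth vstar hmax huniq hPL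
    hvstar
end

section
/- (Descent of the value function along the θ-step.) Assume the μ-PL-in-T assumption and let L₁ = l(1+κ) with κ = l/μ. If L₁·τ ≤ 1 and θ' = θ − τ ∂_θL(θ,T) for some T ∈ L²(P), then φ(θ') − φ(θ) ≤ −(τ/2)‖∂φ(θ)‖² + (τ/2)‖∂_θL(θ,T) − ∂φ(θ)‖². -/
/-!
Fix `x` and write `h*(θ) = max_v h(θ, v; x)`. Gradient ascent in `v` from any `v₀` converges to
`v*(θ)`, and the PL inequality bounds the length of its path by
`√((h*(θ) - h(θ, v₀; x)) / (μ/2))`: this is quadratic growth,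
`μ/2 ‖v₀ - v*(θ)‖² ≤ h*(θ) - h(θ, v₀; x)`. Combined with PL once more it gives
`‖v - v*(θ)‖ ≤ ‖∇_v h(θ, v; x)‖ / μ`, so `v*` is `l₀/μ`-Lipschitz in `θ` and
`θ ↦ ∂_θ h(θ, v*(θ); x)` is `l₀(1 + l₀/μ)`-Lipschitz. As
`h*(b) - h*(a) ≤ h(b, v*(b)) - h(a, v*(b))`, the descent lemma in `θ` bounds the increments of `h*` between the points of finer and finer
partitions of `[θ, θ']`, which yields the descent inequality for `h*` with constant
`l₀(1 + l₀/μ) ≤ l(1 + κ)`. Partitions are used because, for each `θ`, the assumptions hold only for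
`P`-a.e. `x`, so a fixed `x` can only be used at countably many `θ`. Integrating in `x` and
substituting `θ' - θ = -τ ∂_θL(θ,T)` with `L₁ τ ≤ 1` completes the square.
-/

open MeasureTheory

noncomputable section

/-- The value function `φ(θ) := sup_{T ∈ L²(P)} L(θ,T)`, where
`L(θ,T) = E_{x∼P}[ℓ(θ,T(x)) − ‖T(x)−x‖²/(2γ)]`. -/
def phiSup {d p : ℕ} (P : Measure (EuclideanSpace ℝ (Fin d))) (γ : ℝ)
    (ℓ : EuclideanSpace ℝ (Fin p) → EuclideanSpace ℝ (Fin d) → ℝ)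
    (θ : EuclideanSpace ℝ (Fin p)) : ℝ :=
  sSup {y : ℝ | ∃ T : EuclideanSpace ℝ (Fin d) → EuclideanSpace ℝ (Fin d),
    MemLp T 2 P ∧ y = ∫ x, (ℓ θ (T x) - ‖T x - x‖ ^ 2 / (2 * γ)) ∂P}

open Filter Topology Set Finset

open scoped RealInnerProductSpace

theorem sub_le_of_uniform_partition {ψ : ℝ → ℝ} {a K C : ℝ}
    (h : ∀ n : ℕ, 0 < n → ∀ i < n,
      ψ ((i + 1) / n) - ψ (i / n) ≤ a / n + K * i / n ^ 2 + C / n ^ 2) :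
    ψ 1 - ψ 0 ≤ a + K / 2 := by
  have hgauss : ∀ n : ℕ, ∑ i ∈ range n, (i : ℝ) = n * (n - 1) / 2 := by
    intro n
    induction n with
    | zero => simp
    | succ n ih => rw [sum_range_succ, ih]; push_cast; ring
  have hbound : ∀ n : ℕ, 0 < n → ψ 1 - ψ 0 ≤ a + K / 2 + (C - K / 2) / n := by
    intro n hn
    have hn' : (n : ℝ) ≠ 0 := by positivity
    calc ψ 1 - ψ 0 = ∑ i ∈ range n, (ψ ((i + 1) / n) - ψ (i / n)) := by
          have htel := sum_range_sub (fun i : ℕ => ψ (i / n)) n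
          push_cast at htel
          simp [htel, div_self hn']
      _ ≤ ∑ i ∈ range n, (a / n + K * i / n ^ 2 + C / n ^ 2) :=
          sum_le_sum fun i hi => h n hn i (mem_range.1 hi)
      _ = a + K / 2 + (C - K / 2) / n := by
          simp only [sum_add_distrib, sum_const, card_range, nsmul_eq_mul, ← sum_div,
            ← mul_sum, hgauss]
          field_simp
          ring
  have hlim : Tendsto (fun n : ℕ => a + K / 2 + (C - K / 2) / n) atTop (𝓝 (a + K / 2)) := by
    simpa using (tendsto_const_nhds (x := a + K / 2)).add
      (tendsto_const_nhds.div_atTop tendsto_natCast_atTop_atTop)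
  exact ge_of_tendsto hlim (eventually_atTop.2 ⟨1, fun n hn => hbound n hn⟩)

theorem mul_sqrt_le_sqrt_sub_sqrt {a b s k μ : ℝ} (hb : 0 ≤ b) (hk : 0 < k) (hs : 0 ≤ s)
    (hμ : 0 ≤ μ) (hdecr : b + k * s ^ 2 ≤ a) (hpl : 2 * μ * a ≤ s ^ 2) :
    k * √(μ / 2) * s ≤ √a - √b := by
  have ha : 0 ≤ a := by nlinarith
  have hba : √b ≤ √a := Real.sqrt_le_sqrt (by nlinarith)
  have hms : 2 * √(μ / 2) * √a ≤ s := by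
    refine le_of_sq_le_sq ?_ hs
    rw [mul_pow, mul_pow, Real.sq_sqrt (by linarith), Real.sq_sqrt ha]
    linarith
  -- `(√a - √b) (√a + √b) = a - b ≥ k s² ≥ k s · 2 √(μ/2) √a ≥ k s √(μ/2) (√a + √b)`
  have key : k * √(μ / 2) * s * (√a + √b) ≤ (√a - √b) * (√a + √b) := by
    nlinarith [Real.sq_sqrt ha, Real.sq_sqrt hb,
      mul_le_mul_of_nonneg_left hms (mul_nonneg hk.le hs),
      mul_le_mul_of_nonneg_left hba (by positivity : 0 ≤ k * s * √(μ / 2))]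
  rcases (add_nonneg (Real.sqrt_nonneg a) (Real.sqrt_nonneg b)).lt_or_eq with hpos | hzero
  · exact le_of_mul_le_mul_right key hpos
  · have ha0 : a = 0 :=
      (Real.sqrt_eq_zero ha).1 (by linarith [Real.sqrt_nonneg a, Real.sqrt_nonneg b])
    have hs0 : s = 0 := pow_eq_zero_iff two_ne_zero |>.1 <|
      le_antisymm (by nlinarith) (sq_nonneg s)
    simp [hs0, hba]

theorem exists_tendsto_of_mul_dist_le_sub {X : Type*} [PseudoMetricSpace X] [CompleteSpace X]
    {u : ℕ → X} {a : ℕ → ℝ} {c : ℝ} (hc : 0 < c) (ha : ∀ k, 0 ≤ a k)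
    (h : ∀ k, c * dist (u k) (u (k + 1)) ≤ a k - a (k + 1)) :
    ∃ w, Tendsto u atTop (𝓝 w) ∧ c * dist (u 0) w ≤ a 0 := by
  have hsum : ∀ n, ∑ k ∈ range n, dist (u k) (u (k + 1)) ≤ a 0 / c := by
    intro n
    rw [le_div_iff₀ hc, sum_mul]
    calc ∑ k ∈ range n, dist (u k) (u (k + 1)) * c ≤ ∑ k ∈ range n, (a k - a (k + 1)) :=
          sum_le_sum fun k _ => by linarith [h k]
      _ = a 0 - a n := sum_range_sub' a n
      _ ≤ a 0 := by linarith [ha n]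
  have hsummable := summable_of_sum_range_le (fun _ => dist_nonneg) hsum
  obtain ⟨w, hw⟩ := cauchySeq_tendsto_of_complete (cauchySeq_of_summable_dist hsummable)
  refine ⟨w, hw, ?_⟩
  rw [← le_div_iff₀' hc]
  exact (dist_le_tsum_of_dist_le_of_tendsto₀ _ (fun _ => le_rfl) hsummable hw).trans
    (Real.tsum_le_of_sum_range_le (fun _ => dist_nonneg) hsum)

theorem norm_le_mul_add_of_sqrt_le {E F : Type*} [NormedAddCommGroup E] [NormedAddCommGroup F]
    {u : E} {w : F} {l s t : ℝ} (hl : 0 ≤ l) (hs : 0 ≤ s) (ht : 0 ≤ t)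
    (h : √(‖u‖ ^ 2 + ‖w‖ ^ 2) ≤ l * √(s ^ 2 + t ^ 2)) :
    ‖u‖ ≤ l * (s + t) ∧ ‖w‖ ≤ l * (s + t) := by
  have hst : √(s ^ 2 + t ^ 2) ≤ s + t :=
    (Real.sqrt_le_left (by positivity)).2 (by nlinarith [mul_nonneg hs ht])
  have hbound := h.trans (mul_le_mul_of_nonneg_left hst hl)
  constructor
  · refine (Real.le_sqrt_of_sq_le ?_).trans hbound
    nlinarith [sq_nonneg ‖w‖]
  · refine (Real.le_sqrt_of_sq_le ?_).trans hbound
    nlinarith [sq_nonneg ‖u‖]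

theorem inner_neg_smul_add_le {E : Type*} [NormedAddCommGroup E] [InnerProductSpace ℝ E]
    (G g : E) {τ L : ℝ} (hτ : 0 ≤ τ) (hLτ : L * τ ≤ 1) :
    ⟪G, -(τ • g)⟫ + L / 2 * ‖-(τ • g)‖ ^ 2 ≤ -(τ / 2) * ‖G‖ ^ 2 + τ / 2 * ‖g - G‖ ^ 2 := by
  rw [inner_neg_right, real_inner_smul_right, norm_neg, norm_smul, Real.norm_of_nonneg hτ,
    mul_pow, norm_sub_sq_real, real_inner_comm]
  nlinarith [mul_le_mul_of_nonneg_right hLτ (mul_nonneg hτ (sq_nonneg ‖g‖))]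

section LipschitzGradient

variable {F : Type*} [NormedAddCommGroup F] [InnerProductSpace ℝ F] [CompleteSpace F]
  {f : F → ℝ} {g : F → F} {L : ℝ}

theorem le_add_inner_add_of_lipschitz_gradient (hf : ∀ v, HasGradientAt f (g v) v)
    (hg : ∀ v w, ‖g w - g v‖ ≤ L * ‖w - v‖) (x y : F) :
    f y ≤ f x + ⟪g x, y - x⟫ + L / 2 * ‖y - x‖ ^ 2 := by
  set u := y - x
  set r : ℝ → ℝ := fun t => f (x + t • u) - t * ⟪g x, u⟫ - L / 2 * t ^ 2 * ‖u‖ ^ 2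
  have hr : ∀ t, HasDerivAt r (⟪g (x + t • u), u⟫ - ⟪g x, u⟫ - L * t * ‖u‖ ^ 2) t := by
    intro t
    have hline : HasDerivAt (fun s : ℝ => x + s • u) u t := by
      simpa using ((hasDerivAt_id t).smul_const u).const_add x
    have hcomp : HasDerivAt (fun s => f (x + s • u)) ⟪g (x + t • u), u⟫ t :=
      (hf _).hasFDerivAt.comp_hasDerivAt t hline
    have hquad := ((hasDerivAt_pow 2 t).const_mul (L / 2)).mul_const (‖u‖ ^ 2)
    refine ((hcomp.sub ((hasDerivAt_id t).mul_const ⟪g x, u⟫)).sub hquad).congr_deriv ?_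
    ring
  have hr' : ∀ t ∈ interior (Icc (0 : ℝ) 1),
      ⟪g (x + t • u), u⟫ - ⟪g x, u⟫ - L * t * ‖u‖ ^ 2 ≤ 0 := by
    intro t ht
    rw [interior_Icc] at ht
    have hlip : ‖g (x + t • u) - g x‖ ≤ L * (t * ‖u‖) := by
      simpa [norm_smul, abs_of_pos ht.1] using hg x (x + t • u)
    have := real_inner_le_norm (g (x + t • u) - g x) u
    rw [inner_sub_left] at this
    nlinarith [norm_nonneg u]
  have hanti := antitoneOn_of_hasDerivWithinAt_nonpos (convex_Icc 0 1)
    (fun t _ => (hr t).continuousAt.continuousWithinAt) (fun t _ => (hr t).hasDerivWithinAt) hr'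
    (left_mem_Icc.2 zero_le_one) (right_mem_Icc.2 zero_le_one) zero_le_one
  simp only [r, one_smul, zero_smul, add_zero, u, add_sub_cancel] at hanti
  linarith

theorem add_inner_sub_le_of_lipschitz_gradient (hf : ∀ v, HasGradientAt f (g v) v)
    (hg : ∀ v w, ‖g w - g v‖ ≤ L * ‖w - v‖) (x y : F) :
    f x + ⟪g x, y - x⟫ - L / 2 * ‖y - x‖ ^ 2 ≤ f y := by
  have hf' : ∀ v, HasGradientAt (fun w => -f w) (-g v) v := fun v => by
    rw [hasGradientAt_iff_hasFDerivAt, map_neg]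
    exact (hf v).hasFDerivAt.neg
  have hg' : ∀ v w, ‖-g w - -g v‖ ≤ L * ‖w - v‖ := fun v w => by
    rw [neg_sub_neg, norm_sub_rev]; exact hg v w
  have := le_add_inner_add_of_lipschitz_gradient hf' hg' x y
  rw [inner_neg_left] at this
  linarith

theorem abs_le_of_lipschitz_gradient (hf : ∀ v, HasGradientAt f (g v) v)
    (hg : ∀ v w, ‖g w - g v‖ ≤ L * ‖w - v‖) (v : F) :
    |f v| ≤ |f 0| + ‖g 0‖ * ‖v‖ + L / 2 * ‖v‖ ^ 2 := by
  have hup := le_add_inner_add_of_lipschitz_gradient hf hg 0 v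
  have hlow := add_inner_sub_le_of_lipschitz_gradient hf hg 0 v
  have hinner := abs_real_inner_le_norm (g 0) v
  rw [sub_zero] at hup hlow
  rw [abs_le] at hinner ⊢
  constructor <;> linarith [neg_abs_le (f 0), le_abs_self (f 0)]

theorem HasGradientAt.eq_zero_of_forall_le {v g₀ : F} (hf : HasGradientAt f g₀ v)
    (hmax : ∀ w, f w ≤ f v) : g₀ = 0 := by
  apply (InnerProductSpace.toDual ℝ F).injective
  rw [(IsLocalMax.hasFDerivAt_eq_zero (Eventually.of_forall hmax) hf.hasFDerivAt), map_zero]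

structure IsPLMaximizer (f : F → ℝ) (g : F → F) (μ : ℝ) (vs : F) : Prop where
  le_max : ∀ v, f v ≤ f vs
  eq_of_forall_le : ∀ v, (∀ w, f w ≤ f v) → v = vs
  pl : ∀ v, μ * (f vs - f v) ≤ 1 / 2 * ‖g v‖ ^ 2

namespace IsPLMaximizer

variable {μ : ℝ} {vs : F}

/-- The path of gradient ascent `w ↦ w + η • g w` from `v₀` converges to `vs`; by the PL inequality
each step is shorter than the matching decrease of `√(f vs - f ·)`. -/
theorem mul_dist_le_sqrt (hvs : IsPLMaximizer f g μ vs) (hμ : 0 < μ)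
    (hf : ∀ v, HasGradientAt f (g v) v) (hg : ∀ v w, ‖g w - g v‖ ≤ L * ‖w - v‖)
    {η : ℝ} (hη : 0 < η) (hηL : η * L ≤ 1) (v₀ : F) :
    (1 - η * L / 2) * √(μ / 2) * dist v₀ vs ≤ √(f vs - f v₀) := by
  set u : ℕ → F := fun k => (fun w => w + η • g w)^[k] v₀
  have hu : ∀ k, u (k + 1) = u k + η • g (u k) := fun k =>
    Function.iterate_succ_apply' _ _ _
  have hdist : ∀ k, dist (u k) (u (k + 1)) = η * ‖g (u k)‖ := fun k => by
    rw [hu, dist_self_add_right, norm_smul, Real.norm_of_nonneg hη.le]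
  have hgap : ∀ k, 0 ≤ f vs - f (u k) := fun k => sub_nonneg.2 (hvs.le_max _)
  have hpl : ∀ k, 2 * μ * (f vs - f (u k)) ≤ ‖g (u k)‖ ^ 2 := fun k => by
    linarith [hvs.pl (u k)]
  have hk : 0 < η * (1 - η * L / 2) := mul_pos hη (by linarith)
  have hstep : ∀ k, (1 - η * L / 2) * √(μ / 2) * dist (u k) (u (k + 1))
      ≤ √(f vs - f (u k)) - √(f vs - f (u (k + 1))) := by
    intro k
    have hascent := add_inner_sub_le_of_lipschitz_gradient hf hg (u k) (u (k + 1))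
    rw [hu, add_sub_cancel_left, real_inner_smul_right, real_inner_self_eq_norm_sq, norm_smul,
      Real.norm_of_nonneg hη.le] at hascent
    rw [hdist]
    have := mul_sqrt_le_sqrt_sub_sqrt (hgap (k + 1)) hk (norm_nonneg _) hμ.le
      (by rw [hu]; nlinarith) (hpl k)
    linarith
  have hc : 0 < (1 - η * L / 2) * √(μ / 2) :=
    mul_pos (by linarith) (Real.sqrt_pos.2 (by positivity))
  obtain ⟨w, hw, hlen⟩ := exists_tendsto_of_mul_dist_le_sub hc
    (fun k => Real.sqrt_nonneg _) hstep
  have hgrad : Tendsto (fun k => ‖g (u k)‖) atTop (𝓝 0) := by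
    have := (hw.dist (hw.comp (tendsto_add_atTop_nat 1))).div_const η
    simp only [Function.comp_def, hdist, dist_self, zero_div] at this
    simpa [hη.ne'] using this
  have hfw : f w = f vs := by
    have hgap0 : Tendsto (fun k => f vs - f (u k)) atTop (𝓝 0) := by
      refine squeeze_zero hgap (fun k => ?_) (by simpa using (hgrad.pow 2).div_const (2 * μ))
      rw [le_div_iff₀ (by positivity)]
      linarith [hpl k]
    have hfu : Tendsto (fun k => f (u k)) atTop (𝓝 (f vs)) := by
      simpa using (tendsto_const_nhds (x := f vs)).sub hgap0
    exact tendsto_nhds_unique ((hf w).differentiableAt.continuousAt.tendsto.comp hw) hfu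
  rw [hvs.eq_of_forall_le w (fun v => hfw ▸ hvs.le_max v)] at hlen
  simpa [u] using hlen

theorem quadratic_growth (hvs : IsPLMaximizer f g μ vs) (hμ : 0 < μ)
    (hf : ∀ v, HasGradientAt f (g v) v) (hg : ∀ v w, ‖g w - g v‖ ≤ L * ‖w - v‖) (v₀ : F) :
    μ / 2 * ‖v₀ - vs‖ ^ 2 ≤ f vs - f v₀ := by
  have hlim : Tendsto (fun η => (1 - η * L / 2) * √(μ / 2) * dist v₀ vs) (𝓝[>] 0)
      (𝓝 (√(μ / 2) * dist v₀ vs)) := by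
    have : Continuous (fun η : ℝ => (1 - η * L / 2) * √(μ / 2) * dist v₀ vs) := by fun_prop
    simpa using (this.tendsto 0).mono_left nhdsWithin_le_nhds
  have hsmall : ∀ᶠ η in 𝓝[>] (0 : ℝ), η * L ≤ 1 := by
    have : Tendsto (fun η : ℝ => η * L) (𝓝[>] 0) (𝓝 0) := by
      simpa using ((continuous_mul_const L).tendsto 0).mono_left nhdsWithin_le_nhds
    exact this.eventually (eventually_le_nhds zero_lt_one)
  have hle : √(μ / 2) * ‖v₀ - vs‖ ≤ √(f vs - f v₀) := by
    rw [← dist_eq_norm]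
    refine le_of_tendsto hlim ?_
    filter_upwards [hsmall, self_mem_nhdsWithin] with η hηL hη
    exact hvs.mul_dist_le_sqrt hμ hf hg hη hηL v₀
  have := pow_le_pow_left₀ (by positivity) hle 2
  rwa [mul_pow, Real.sq_sqrt (by positivity), Real.sq_sqrt (sub_nonneg.2 (hvs.le_max v₀))] at this

theorem norm_sub_le (hvs : IsPLMaximizer f g μ vs) (hμ : 0 < μ)
    (hf : ∀ v, HasGradientAt f (g v) v) (hg : ∀ v w, ‖g w - g v‖ ≤ L * ‖w - v‖) (v : F) :
    ‖v - vs‖ ≤ ‖g v‖ / μ := by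
  have hqg := hvs.quadratic_growth hμ hf hg v
  have hpl := hvs.pl v
  rw [le_div_iff₀ hμ]
  exact le_of_sq_le_sq (by nlinarith) (norm_nonneg _)

end IsPLMaximizer

end LipschitzGradient

section Segment

variable {E : Type*} [NormedAddCommGroup E] [InnerProductSpace ℝ E]

theorem sub_le_inner_add_of_partition {φ : E → ℝ} {G : E → E} {S : Set E} {θ θ' : E} {C K : ℝ}
    (hS : ∀ n i : ℕ, i ≤ n → θ + ((i : ℝ) / n) • (θ' - θ) ∈ S)
    (hφ : ∀ a ∈ S, ∀ b ∈ S, φ b - φ a ≤ ⟪G a, b - a⟫ + C * ‖b - a‖ ^ 2)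
    (hG : ∀ a ∈ S, ‖G a - G θ‖ ≤ K * ‖a - θ‖) :
    φ θ' - φ θ ≤ ⟪G θ, θ' - θ⟫ + K / 2 * ‖θ' - θ‖ ^ 2 := by
  set δ := θ' - θ
  have key := sub_le_of_uniform_partition (ψ := fun t => φ (θ + t • δ)) (a := ⟪G θ, δ⟫)
    (K := K * ‖δ‖ ^ 2) (C := C * ‖δ‖ ^ 2) ?_
  · simpa [δ, mul_div_right_comm K] using key
  intro n hn i hi
  have hmem : θ + ((i : ℝ) / n) • δ ∈ S := hS n i hi.le
  have hmem' : θ + (((i : ℝ) + 1) / n) • δ ∈ S := by exact_mod_cast hS n (i + 1) hi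
  have hstep : θ + (((i : ℝ) + 1) / n) • δ - (θ + ((i : ℝ) / n) • δ) = (1 / (n : ℝ)) • δ := by
    rw [add_sub_add_left_eq_sub, ← sub_smul]; congr 1; ring
  have hdist : ‖θ + ((i : ℝ) / n) • δ - θ‖ = i / n * ‖δ‖ := by
    rw [add_sub_cancel_left, norm_smul, Real.norm_of_nonneg (by positivity)]
  have hinner : ⟪G (θ + ((i : ℝ) / n) • δ) - G θ, δ⟫ ≤ K * (i / n * ‖δ‖) * ‖δ‖ :=
    (real_inner_le_norm _ _).trans
      (mul_le_mul_of_nonneg_right (hdist ▸ hG _ hmem) (norm_nonneg _))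
  have h1 := hφ _ hmem _ hmem'
  rw [hstep, real_inner_smul_right, norm_smul, Real.norm_of_nonneg (by positivity)] at h1
  have h2 : ⟪G (θ + ((i : ℝ) / n) • δ), δ⟫ ≤ ⟪G θ, δ⟫ + K * (i / n * ‖δ‖) * ‖δ‖ := by
    rw [inner_sub_left] at hinner
    linarith
  have hn' : (0 : ℝ) < n := by exact_mod_cast hn
  calc φ (θ + (((i : ℝ) + 1) / n) • δ) - φ (θ + ((i : ℝ) / n) • δ)
      ≤ 1 / n * ⟪G (θ + ((i : ℝ) / n) • δ), δ⟫ + C * (1 / n * ‖δ‖) ^ 2 := h1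
    _ ≤ 1 / n * (⟪G θ, δ⟫ + K * (i / n * ‖δ‖) * ‖δ‖) + C * (1 / n * ‖δ‖) ^ 2 := by gcongr
    _ = _ := by field_simp

end Segment

section Coupling

variable {E F : Type*} [NormedAddCommGroup E] [InnerProductSpace ℝ E] [CompleteSpace E]
  [NormedAddCommGroup F] [InnerProductSpace ℝ F] [CompleteSpace F]

/-- `H a v` stands for `h(θ, v; x)` at a fixed `x`, with `a = θ`; `Hθ` and `Hv` are its partial
gradients. -/
structure HasLipschitzPartialGradients (H : E → F → ℝ) (Hθ : E → F → E) (Hv : E → F → F)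
    (K L : ℝ) : Prop where
  nonneg : 0 ≤ K
  hasGradientAt_fst : ∀ a v, HasGradientAt (fun a => H a v) (Hθ a v) a
  hasGradientAt_snd : ∀ a v, HasGradientAt (H a) (Hv a v) v
  norm_fst_sub_le : ∀ a v b w, ‖Hθ b w - Hθ a v‖ ≤ K * (‖b - a‖ + ‖w - v‖)
  norm_snd_sub_le_fst : ∀ a b v, ‖Hv b v - Hv a v‖ ≤ K * ‖b - a‖
  norm_snd_sub_le_snd : ∀ a v w, ‖Hv a w - Hv a v‖ ≤ L * ‖w - v‖

namespace HasLipschitzPartialGradients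

variable {H : E → F → ℝ} {Hθ : E → F → E} {Hv : E → F → F} {K L μ : ℝ} {vs : E → F}

theorem norm_maximizer_sub_le (hH : HasLipschitzPartialGradients H Hθ Hv K L) (hμ : 0 < μ)
    {a b : E} (ha : IsPLMaximizer (H a) (Hv a) μ (vs a))
    (hb : IsPLMaximizer (H b) (Hv b) μ (vs b)) :
    ‖vs a - vs b‖ ≤ K / μ * ‖b - a‖ := by
  have hcrit : Hv a (vs a) = 0 :=
    (hH.hasGradientAt_snd a (vs a)).eq_zero_of_forall_le ha.le_max
  calc ‖vs a - vs b‖ ≤ ‖Hv b (vs a)‖ / μ :=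
        hb.norm_sub_le hμ (hH.hasGradientAt_snd b) (hH.norm_snd_sub_le_snd b) (vs a)
    _ = ‖Hv b (vs a) - Hv a (vs a)‖ / μ := by rw [hcrit, sub_zero]
    _ ≤ K * ‖b - a‖ / μ := by gcongr; exact hH.norm_snd_sub_le_fst a b (vs a)
    _ = K / μ * ‖b - a‖ := by ring

theorem value_sub_le (hH : HasLipschitzPartialGradients H Hθ Hv K L) (hμ : 0 < μ)
    {a b : E} (ha : IsPLMaximizer (H a) (Hv a) μ (vs a))
    (hb : IsPLMaximizer (H b) (Hv b) μ (vs b)) :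
    H b (vs b) - H a (vs a) ≤ ⟪Hθ a (vs a), b - a⟫ + (K * (K / μ) + K / 2) * ‖b - a‖ ^ 2 := by
  have hmax : H a (vs b) ≤ H a (vs a) := ha.le_max (vs b)
  have hdescent := le_add_inner_add_of_lipschitz_gradient (hH.hasGradientAt_fst · (vs b))
    (fun a' b' => by simpa using hH.norm_fst_sub_le a' (vs b) b' (vs b)) a b
  have hinner : ⟪Hθ a (vs b) - Hθ a (vs a), b - a⟫ ≤ K * (K / μ) * ‖b - a‖ ^ 2 :=
    calc ⟪Hθ a (vs b) - Hθ a (vs a), b - a⟫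
        ≤ ‖Hθ a (vs b) - Hθ a (vs a)‖ * ‖b - a‖ := real_inner_le_norm _ _
      _ ≤ K * ‖vs b - vs a‖ * ‖b - a‖ := by
          gcongr
          simpa using hH.norm_fst_sub_le a (vs a) a (vs b)
      _ ≤ K * (K / μ * ‖b - a‖) * ‖b - a‖ := by
          have := hH.nonneg
          gcongr
          rw [norm_sub_rev]
          exact hH.norm_maximizer_sub_le hμ ha hb
      _ = K * (K / μ) * ‖b - a‖ ^ 2 := by ring
  rw [inner_sub_left] at hinner
  linarith

theorem norm_gradient_maximizer_sub_le (hH : HasLipschitzPartialGradients H Hθ Hv K L)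
    (hμ : 0 < μ) {a b : E} (ha : IsPLMaximizer (H a) (Hv a) μ (vs a))
    (hb : IsPLMaximizer (H b) (Hv b) μ (vs b)) :
    ‖Hθ b (vs b) - Hθ a (vs a)‖ ≤ K * (1 + K / μ) * ‖b - a‖ :=
  calc ‖Hθ b (vs b) - Hθ a (vs a)‖ ≤ K * (‖b - a‖ + ‖vs b - vs a‖) := hH.norm_fst_sub_le _ _ _ _
    _ ≤ K * (‖b - a‖ + K / μ * ‖b - a‖) := by
        gcongr
        · exact hH.nonneg
        · rw [norm_sub_rev]; exact hH.norm_maximizer_sub_le hμ ha hb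
    _ = K * (1 + K / μ) * ‖b - a‖ := by ring

theorem value_sub_le_of_partition (hH : HasLipschitzPartialGradients H Hθ Hv K L) (hμ : 0 < μ)
    {θ θ' : E}
    (hS : ∀ n i : ℕ, i ≤ n → IsPLMaximizer (H (θ + ((i : ℝ) / n) • (θ' - θ)))
      (Hv (θ + ((i : ℝ) / n) • (θ' - θ))) μ (vs (θ + ((i : ℝ) / n) • (θ' - θ)))) :
    H θ' (vs θ') - H θ (vs θ) ≤ ⟪Hθ θ (vs θ), θ' - θ⟫ + K * (1 + K / μ) / 2 * ‖θ' - θ‖ ^ 2 := by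
  have hθ : IsPLMaximizer (H θ) (Hv θ) μ (vs θ) := by simpa using hS 0 0 le_rfl
  exact sub_le_inner_add_of_partition (φ := fun a => H a (vs a)) (G := fun a => Hθ a (vs a))
    (S := {a | IsPLMaximizer (H a) (Hv a) μ (vs a)}) hS
    (fun a ha b hb => hH.value_sub_le hμ ha hb)
    (fun a ha => hH.norm_gradient_maximizer_sub_le hμ hθ ha)

end HasLipschitzPartialGradients

end Coupling

section ProximalObjective

variable {E F : Type*} [NormedAddCommGroup E] [InnerProductSpace ℝ E] [CompleteSpace E]
  [NormedAddCommGroup F] [InnerProductSpace ℝ F] [CompleteSpace F]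

theorem hasGradientAt_norm_sub_sq_div (γ : ℝ) (x v : F) :
    HasGradientAt (fun w => ‖w - x‖ ^ 2 / (2 * γ)) (γ⁻¹ • (v - x)) v := by
  simp_rw [div_eq_mul_inv]
  rw [hasGradientAt_iff_hasFDerivAt]
  refine (HasFDerivAt.mul_const ((hasFDerivAt_id v).sub_const x).norm_sq _).congr_fderiv ?_
  ext w
  simp
  ring

theorem hasLipschitzPartialGradients_sub_norm_sub_sq {ℓ : E → F → ℝ} {gθ : E → F → E}
    {gv : E → F → F} {l₀ γ : ℝ} (hl₀ : 0 ≤ l₀) (hγ : 0 ≤ γ)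
    (hgθ : ∀ a v, HasGradientAt (fun a => ℓ a v) (gθ a v) a)
    (hgv : ∀ a v, HasGradientAt (fun v => ℓ a v) (gv a v) v)
    (hgθ_lip : ∀ a v b w, ‖gθ b w - gθ a v‖ ≤ l₀ * (‖b - a‖ + ‖w - v‖))
    (hgv_lip : ∀ a v b w, ‖gv b w - gv a v‖ ≤ l₀ * (‖b - a‖ + ‖w - v‖)) (x : F) :
    HasLipschitzPartialGradients (fun a v => ℓ a v - ‖v - x‖ ^ 2 / (2 * γ)) gθ
      (fun a v => gv a v - γ⁻¹ • (v - x)) l₀ (l₀ + γ⁻¹) where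
  nonneg := hl₀
  hasGradientAt_fst a v := by
    rw [hasGradientAt_iff_hasFDerivAt]
    exact (hgθ a v).hasFDerivAt.sub_const _
  hasGradientAt_snd a v := by
    rw [hasGradientAt_iff_hasFDerivAt, map_sub]
    exact (hgv a v).hasFDerivAt.sub (hasGradientAt_norm_sub_sq_div γ x v).hasFDerivAt
  norm_fst_sub_le := hgθ_lip
  norm_snd_sub_le_fst a b v := by simpa using hgv_lip a v b v
  norm_snd_sub_le_snd a v w := by
    rw [sub_sub_sub_comm, ← smul_sub, sub_sub_sub_cancel_right, add_mul]
    refine (norm_sub_le _ _).trans (add_le_add (by simpa using hgv_lip a v a w) ?_)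
    rw [norm_smul, Real.norm_of_nonneg (inv_nonneg.2 hγ)]

theorem ae_sub_le_inner_add_of_ae_isPLMaximizer [MeasurableSpace F] {P : Measure F}
    {ℓ : E → F → ℝ} {gθ : E → F → E} {gv : E → F → F} {l₀ γ μ : ℝ} (hl₀ : 0 ≤ l₀) (hγ : 0 ≤ γ)
    (hμ : 0 < μ) (hgθ : ∀ a v, HasGradientAt (fun a => ℓ a v) (gθ a v) a)
    (hgv : ∀ a v, HasGradientAt (fun v => ℓ a v) (gv a v) v)
    (hgθ_lip : ∀ a v b w, ‖gθ b w - gθ a v‖ ≤ l₀ * (‖b - a‖ + ‖w - v‖))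
    (hgv_lip : ∀ a v b w, ‖gv b w - gv a v‖ ≤ l₀ * (‖b - a‖ + ‖w - v‖)) {vs : E → F → F}
    (hvs : ∀ a, ∀ᵐ x ∂P, IsPLMaximizer (fun v => ℓ a v - ‖v - x‖ ^ 2 / (2 * γ))
      (fun v => gv a v - γ⁻¹ • (v - x)) μ (vs a x)) (θ θ' : E) :
    ∀ᵐ x ∂P, (ℓ θ' (vs θ' x) - ‖vs θ' x - x‖ ^ 2 / (2 * γ))
        - (ℓ θ (vs θ x) - ‖vs θ x - x‖ ^ 2 / (2 * γ))
      ≤ ⟪gθ θ (vs θ x), θ' - θ⟫ + l₀ * (1 + l₀ / μ) / 2 * ‖θ' - θ‖ ^ 2 := by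
  have hpartition : ∀ᵐ x ∂P, ∀ n i : ℕ, IsPLMaximizer
      (fun v => ℓ (θ + ((i : ℝ) / n) • (θ' - θ)) v - ‖v - x‖ ^ 2 / (2 * γ))
      (fun v => gv (θ + ((i : ℝ) / n) • (θ' - θ)) v - γ⁻¹ • (v - x)) μ
      (vs (θ + ((i : ℝ) / n) • (θ' - θ)) x) := by
    simp only [ae_all_iff]
    exact fun n i => hvs _
  filter_upwards [hpartition] with x hx
  exact (hasLipschitzPartialGradients_sub_norm_sub_sq hl₀ hγ hgθ hgv hgθ_lip hgv_lip x
    ).value_sub_le_of_partition (vs := fun a => vs a x) hμ fun n i _ => hx n i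

end ProximalObjective

section Integrability

variable {Ω F : Type*} [MeasurableSpace Ω] {P : Measure Ω} [IsFiniteMeasure P]
  [NormedAddCommGroup F]

theorem integrable_comp_of_norm_le_quadratic {E : Type*} [NormedAddCommGroup E] {G : F → E}
    (hG : Continuous G) {a b c : ℝ} (hbound : ∀ v, ‖G v‖ ≤ a + b * ‖v‖ + c * ‖v‖ ^ 2)
    {T : Ω → F} (hT : MemLp T 2 P) : Integrable (fun ω => G (T ω)) P := by
  have hT2 : Integrable (fun ω => ‖T ω‖ ^ 2) P :=
    (memLp_two_iff_integrable_sq_norm hT.aestronglyMeasurable).1 hT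
  exact ((integrable_const a).add ((hT.integrable one_le_two).norm.const_mul b)
    |>.add (hT2.const_mul c)).mono' (hG.comp_aestronglyMeasurable hT.aestronglyMeasurable)
    (Eventually.of_forall fun ω => hbound (T ω))

theorem integrable_comp_of_lipschitz {E : Type*} [NormedAddCommGroup E] {G : F → E} {K : ℝ}
    (hG : ∀ v w, ‖G w - G v‖ ≤ K * ‖w - v‖) {T : Ω → F} (hT : MemLp T 2 P) :
    Integrable (fun ω => G (T ω)) P := by
  refine integrable_comp_of_norm_le_quadratic (a := ‖G 0‖) (b := K) (c := 0)
    (LipschitzWith.of_dist_le' (K := K) fun v w => by simpa [dist_eq_norm] using hG w v).continuous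
    (fun v => ?_) hT
  have hsub := norm_sub_norm_le (G v) (G 0)
  have hlip := hG 0 v
  rw [sub_zero] at hlip
  linarith

theorem integrable_comp_of_lipschitz_gradient [InnerProductSpace ℝ F] [CompleteSpace F]
    {f : F → ℝ} {g : F → F} {L : ℝ} (hf : ∀ v, HasGradientAt f (g v) v)
    (hg : ∀ v w, ‖g w - g v‖ ≤ L * ‖w - v‖)
    {T : Ω → F} (hT : MemLp T 2 P) : Integrable (fun ω => f (T ω)) P :=
  integrable_comp_of_norm_le_quadratic
    (continuous_iff_continuousAt.2 fun v => (hf v).differentiableAt.continuousAt)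
    (abs_le_of_lipschitz_gradient hf hg) hT

end Integrability

theorem integrable_sub_norm_sub_sq {F : Type*} [NormedAddCommGroup F] [InnerProductSpace ℝ F]
    [CompleteSpace F] [MeasurableSpace F] [BorelSpace F] [SecondCountableTopology F]
    {P : Measure F} [IsFiniteMeasure P] (hP2 : Integrable (fun x => ‖x‖ ^ 2) P)
    {f : F → ℝ} {g : F → F} {L : ℝ} (hf : ∀ v, HasGradientAt f (g v) v)
    (hg : ∀ v w, ‖g w - g v‖ ≤ L * ‖w - v‖) (γ : ℝ) {T : F → F} (hT : MemLp T 2 P) :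
    Integrable (fun x => f (T x) - ‖T x - x‖ ^ 2 / (2 * γ)) P := by
  have hid : MemLp (fun x : F => x) 2 P :=
    (memLp_two_iff_integrable_sq_norm aestronglyMeasurable_id).2 hP2
  have hsub := hT.sub hid
  exact (integrable_comp_of_lipschitz_gradient hf hg hT).sub
    (((memLp_two_iff_integrable_sq_norm hsub.aestronglyMeasurable).1 hsub).div_const _)

theorem integral_le_inner_integral_add {Ω E : Type*} [MeasurableSpace Ω] {P : Measure Ω}
    [IsProbabilityMeasure P] [NormedAddCommGroup E] [InnerProductSpace ℝ E] [CompleteSpace E]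
    {φ : Ω → ℝ} {G : Ω → E} (hφ : Integrable φ P) (hG : Integrable G P) {u : E} {c : ℝ}
    (h : ∀ᵐ ω ∂P, φ ω ≤ ⟪G ω, u⟫ + c) :
    ∫ ω, φ ω ∂P ≤ ⟪∫ ω, G ω ∂P, u⟫ + c := by
  have hinner : Integrable (fun ω => ⟪G ω, u⟫) P := hG.inner_const u
  calc ∫ ω, φ ω ∂P ≤ ∫ ω, (⟪G ω, u⟫ + c) ∂P :=
        integral_mono_ae hφ (hinner.add (integrable_const c)) h
    _ = ⟪∫ ω, G ω ∂P, u⟫ + c := by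
      rw [integral_add hinner (integrable_const c), integral_const]
      simp_rw [real_inner_comm u]
      rw [integral_inner hG, probReal_univ, one_smul]

theorem phiSup_eq_integral {d p : ℕ} {P : Measure (EuclideanSpace ℝ (Fin d))} {γ : ℝ}
    {ℓ : EuclideanSpace ℝ (Fin p) → EuclideanSpace ℝ (Fin d) → ℝ} {θ : EuclideanSpace ℝ (Fin p)}
    {vs : EuclideanSpace ℝ (Fin d) → EuclideanSpace ℝ (Fin d)} (hvs : MemLp vs 2 P)
    (hmax : ∀ᵐ x ∂P, ∀ v, ℓ θ v - ‖v - x‖ ^ 2 / (2 * γ) ≤ ℓ θ (vs x) - ‖vs x - x‖ ^ 2 / (2 * γ))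
    (hint : ∀ T, MemLp T 2 P → Integrable (fun x => ℓ θ (T x) - ‖T x - x‖ ^ 2 / (2 * γ)) P) :
    phiSup P γ ℓ θ = ∫ x, (ℓ θ (vs x) - ‖vs x - x‖ ^ 2 / (2 * γ)) ∂P := by
  refine IsGreatest.csSup_eq ⟨⟨vs, hvs, rfl⟩, ?_⟩
  rintro y ⟨T, hT, rfl⟩
  exact integral_mono_ae (hint T hT) (hint vs hvs) (hmax.mono fun x hx => hx (T x))

theorem value_function_descent_theta_step_general
    {d p : ℕ} (P : Measure (EuclideanSpace ℝ (Fin d))) [IsProbabilityMeasure P]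
    (hP2 : Integrable (fun x => ‖x‖ ^ 2) P)
    (ℓ : EuclideanSpace ℝ (Fin p) → EuclideanSpace ℝ (Fin d) → ℝ)
    (gθ : EuclideanSpace ℝ (Fin p) → EuclideanSpace ℝ (Fin d) → EuclideanSpace ℝ (Fin p))
    (gv : EuclideanSpace ℝ (Fin p) → EuclideanSpace ℝ (Fin d) → EuclideanSpace ℝ (Fin d))
    (l₀ γ μ : ℝ) (hl₀ : 0 ≤ l₀) (hγ : 0 < γ) (hμ : 0 < μ)
    (hgθ : ∀ θ v, HasGradientAt (fun θ' => ℓ θ' v) (gθ θ v) θ)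
    (hgv : ∀ θ v, HasGradientAt (fun v' => ℓ θ v') (gv θ v) v)
    (hsmooth : ∀ θ v θ' v',
      Real.sqrt (‖gθ θ' v' - gθ θ v‖ ^ 2 + ‖gv θ' v' - gv θ v‖ ^ 2)
        ≤ l₀ * Real.sqrt (‖θ' - θ‖ ^ 2 + ‖v' - v‖ ^ 2))
    (vstar : EuclideanSpace ℝ (Fin p) → EuclideanSpace ℝ (Fin d) → EuclideanSpace ℝ (Fin d))
    (hmax : ∀ θ, ∀ᵐ x ∂P, ∀ v,
      ℓ θ v - ‖v - x‖ ^ 2 / (2 * γ) ≤ ℓ θ (vstar θ x) - ‖vstar θ x - x‖ ^ 2 / (2 * γ))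
    (huniq : ∀ θ, ∀ᵐ x ∂P, ∀ v,
      (∀ w, ℓ θ w - ‖w - x‖ ^ 2 / (2 * γ) ≤ ℓ θ v - ‖v - x‖ ^ 2 / (2 * γ)) → v = vstar θ x)
    (hPL : ∀ θ, ∀ᵐ x ∂P, ∀ v,
      μ * ((ℓ θ (vstar θ x) - ‖vstar θ x - x‖ ^ 2 / (2 * γ)) - (ℓ θ v - ‖v - x‖ ^ 2 / (2 * γ)))
        ≤ (1 / 2) * ‖gv θ v - γ⁻¹ • (v - x)‖ ^ 2)
    (hvstar : ∀ θ, MemLp (vstar θ) 2 P)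
    (τ : ℝ) (hτpos : 0 < τ)
    (hτ : (l₀ + γ⁻¹) * (1 + (l₀ + γ⁻¹) / μ) * τ ≤ 1)
    (θ : EuclideanSpace ℝ (Fin p))
    (T : EuclideanSpace ℝ (Fin d) → EuclideanSpace ℝ (Fin d))
    (θ' : EuclideanSpace ℝ (Fin p)) (hθ' : θ' = θ - τ • (∫ x, gθ θ (T x) ∂P)) :
    phiSup P γ ℓ θ' - phiSup P γ ℓ θ
      ≤ -(τ / 2) * ‖∫ x, gθ θ (vstar θ x) ∂P‖ ^ 2
        + (τ / 2) * ‖(∫ x, gθ θ (T x) ∂P) - (∫ x, gθ θ (vstar θ x) ∂P)‖ ^ 2 := by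
  have hjoint a v b w := norm_le_mul_add_of_sqrt_le hl₀ (norm_nonneg _) (norm_nonneg _)
    (hsmooth a v b w)
  have hint a T (hT : MemLp T 2 P) := integrable_sub_norm_sub_sq hP2 (hgv a)
    (fun v w => by simpa using (hjoint a v a w).2) γ hT
  have hphi a := phiSup_eq_integral (hvstar a) (hmax a) (hint a)
  have hpointwise := ae_sub_le_inner_add_of_ae_isPLMaximizer hl₀ hγ.le hμ hgθ hgv
    (fun a v b w => (hjoint a v b w).1) (fun a v b w => (hjoint a v b w).2)
    (fun a => by filter_upwards [hmax a, huniq a, hPL a] with x h₁ h₂ h₃ using ⟨h₁, h₂, h₃⟩)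
    θ θ'
  have hdescent : phiSup P γ ℓ θ' - phiSup P γ ℓ θ
      ≤ ⟪∫ x, gθ θ (vstar θ x) ∂P, θ' - θ⟫ + l₀ * (1 + l₀ / μ) / 2 * ‖θ' - θ‖ ^ 2 := by
    rw [hphi, hphi, ← integral_sub (hint _ _ (hvstar θ')) (hint _ _ (hvstar θ))]
    exact integral_le_inner_integral_add ((hint _ _ (hvstar θ')).sub (hint _ _ (hvstar θ)))
      (integrable_comp_of_lipschitz (fun v w => by simpa using (hjoint θ v θ w).1) (hvstar θ))
      hpointwise
  have hstep : l₀ * (1 + l₀ / μ) * τ ≤ 1 := by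
    refine le_trans ?_ hτ
    have : l₀ ≤ l₀ + γ⁻¹ := le_add_of_nonneg_right (inv_nonneg.2 hγ.le)
    gcongr
  have hδ : θ' - θ = -(τ • ∫ x, gθ θ (T x) ∂P) := by rw [hθ', sub_sub_cancel_left]
  rw [hδ] at hdescent
  exact hdescent.trans (inner_neg_smul_add_le _ _ hτpos.le hstep)

/-- (Descent of the value function along the θ-step.) Under the
μ-PL-in-T assumption, with `L₁ = l(1+κ)`, `l = l₀ + 1/γ`, `κ = l/μ`: if `L₁·τ ≤ 1`
and `θ' = θ − τ ∂_θL(θ,T)` for some `T ∈ L²(P)`, then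
`φ(θ') − φ(θ) ≤ −(τ/2)‖∂φ(θ)‖² + (τ/2)‖∂_θL(θ,T) − ∂φ(θ)‖²`,
where `∂φ(θ) = E_{x∼P}[∂_θℓ(θ,v*(θ;x))]`. -/
theorem value_function_descent_theta_step
    {d p : ℕ} (P : Measure (EuclideanSpace ℝ (Fin d))) [IsProbabilityMeasure P]
    (hP2 : Integrable (fun x => ‖x‖ ^ 2) P)
    (ℓ : EuclideanSpace ℝ (Fin p) → EuclideanSpace ℝ (Fin d) → ℝ)
    (gθ : EuclideanSpace ℝ (Fin p) → EuclideanSpace ℝ (Fin d) → EuclideanSpace ℝ (Fin p))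
    (gv : EuclideanSpace ℝ (Fin p) → EuclideanSpace ℝ (Fin d) → EuclideanSpace ℝ (Fin d))
    (l₀ γ μ : ℝ) (hl₀ : 0 ≤ l₀) (hγ : 0 < γ) (hμ : 0 < μ)
    (hgθ : ∀ θ v, HasGradientAt (fun θ' => ℓ θ' v) (gθ θ v) θ)
    (hgv : ∀ θ v, HasGradientAt (fun v' => ℓ θ v') (gv θ v) v)
    (hsmooth : ∀ θ v θ' v',
      Real.sqrt (‖gθ θ' v' - gθ θ v‖ ^ 2 + ‖gv θ' v' - gv θ v‖ ^ 2)
        ≤ l₀ * Real.sqrt (‖θ' - θ‖ ^ 2 + ‖v' - v‖ ^ 2))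
    (vstar : EuclideanSpace ℝ (Fin p) → EuclideanSpace ℝ (Fin d) → EuclideanSpace ℝ (Fin d))
    (hmax : ∀ θ, ∀ᵐ x ∂P, ∀ v,
      ℓ θ v - ‖v - x‖ ^ 2 / (2 * γ) ≤ ℓ θ (vstar θ x) - ‖vstar θ x - x‖ ^ 2 / (2 * γ))
    (huniq : ∀ θ, ∀ᵐ x ∂P, ∀ v,
      (∀ w, ℓ θ w - ‖w - x‖ ^ 2 / (2 * γ) ≤ ℓ θ v - ‖v - x‖ ^ 2 / (2 * γ)) → v = vstar θ x)
    (hPL : ∀ θ, ∀ᵐ x ∂P, ∀ v,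
      μ * ((ℓ θ (vstar θ x) - ‖vstar θ x - x‖ ^ 2 / (2 * γ)) - (ℓ θ v - ‖v - x‖ ^ 2 / (2 * γ)))
        ≤ (1 / 2) * ‖gv θ v - γ⁻¹ • (v - x)‖ ^ 2)
    (hvstar : ∀ θ, MemLp (vstar θ) 2 P)
    (τ : ℝ) (hτpos : 0 < τ)
    (hτ : (l₀ + γ⁻¹) * (1 + (l₀ + γ⁻¹) / μ) * τ ≤ 1)
    (θ : EuclideanSpace ℝ (Fin p))
    (T : EuclideanSpace ℝ (Fin d) → EuclideanSpace ℝ (Fin d)) (hT : MemLp T 2 P)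
    (θ' : EuclideanSpace ℝ (Fin p)) (hθ' : θ' = θ - τ • (∫ x, gθ θ (T x) ∂P)) :
    phiSup P γ ℓ θ' - phiSup P γ ℓ θ
      ≤ -(τ / 2) * ‖∫ x, gθ θ (vstar θ x) ∂P‖ ^ 2
        + (τ / 2) * ‖(∫ x, gθ θ (T x) ∂P) - (∫ x, gθ θ (vstar θ x) ∂P)‖ ^ 2 :=
  value_function_descent_theta_step_general P hP2 ℓ gθ gv l₀ γ μ hl₀ hγ hμ hgθ hgv hsmooth vstar
    hmax huniq hPL hvstar τ hτpos hτ θ T θ' hθ'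
end
end

section
/- (Lipschitz dependence of the proximal map on θ.) Assume ℓ is C², l₀-smooth, and ρ-weakly convex–weakly concave, and let 0 < s < 1/ρ, so that 1 − s(ρ − 1/γ) > 0 and the proximal map T⁺(T;θ) is well defined. Then for every T ∈ L²(P) and all θ, θ̃ ∈ ℝ^p, ‖T⁺(T;θ̃) − T⁺(T;θ)‖_{L²(P)} ≤ (s l₀ / (1 − s(ρ − 1/γ))) ‖θ̃ − θ‖. -/
/-!
For fixed `θ` the objective `G_θ(V) = H(V, θ) + ‖V - T‖² / (2s)` is `μ`-strongly convex on `L²(P)`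
with `μ = 1/γ + 1/s - ρ > 0`, since its integrand is: the two quadratic terms contribute `1/γ`
and `1/s`, and the weak concavity of `ℓ(θ, ·)` costs at most `ρ`. So the minimiser `T⁺(T; θ)`
has quadratic growth, `G_θ(T⁺) + (μ/2) ‖V - T⁺‖² ≤ G_θ(V)`. Adding this for `(θ, T⁺(T; θ̃))`
and `(θ̃, T⁺(T; θ))` leaves `μ ‖Δ‖² ≤ E[φ(T⁺(T; θ̃)) - φ(T⁺(T; θ))]` with `φ = ℓ(θ̃, ·) - ℓ(θ, ·)`,
which is `l₀ ‖θ̃ - θ‖`-Lipschitz because `∂_v ℓ` is `l₀`-Lipschitz in `θ`. Young's inequality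
gives `‖Δ‖ ≤ l₀ ‖θ̃ - θ‖ / μ`, and `s / (1 - s(ρ - 1/γ)) = 1/μ`.
-/

open MeasureTheory Set Filter Topology

section Gradient

variable {E : Type*} [NormedAddCommGroup E] [InnerProductSpace ℝ E] [CompleteSpace E]

theorem HasGradientAt.sub {f g : E → ℝ} {f' g' x : E} (hf : HasGradientAt f f' x)
    (hg : HasGradientAt g g' x) : HasGradientAt (fun y => f y - g y) (f' - g') x := by
  rw [hasGradientAt_iff_hasFDerivAt, map_sub]
  exact hf.hasFDerivAt.sub hg.hasFDerivAt

theorem Convex.norm_image_sub_le_of_norm_hasGradient_le {f : E → ℝ} {f' : E → E}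
    {s : Set E} {C : ℝ} {x y : E} (hf : ∀ x ∈ s, HasGradientAt f (f' x) x)
    (bound : ∀ x ∈ s, ‖f' x‖ ≤ C) (hs : Convex ℝ s) (hx : x ∈ s) (hy : y ∈ s) :
    ‖f y - f x‖ ≤ C * ‖y - x‖ :=
  hs.norm_image_sub_le_of_norm_hasFDerivWithin_le
    (fun z hz => (hf z hz).hasFDerivAt.hasFDerivWithinAt)
    (fun z hz => (LinearIsometryEquiv.norm_map _ _).trans_le (bound z hz)) hx hy

theorem abs_sub_le_of_hasGradientAt_of_lipschitz {f : E → ℝ} {f' : E → E} {K : ℝ} (hK : 0 ≤ K)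
    (hf : ∀ x, HasGradientAt f (f' x) x) (hf' : ∀ x y, ‖f' y - f' x‖ ≤ K * ‖y - x‖) (v : E) :
    |f v - f 0| ≤ (‖f' 0‖ + K * ‖v‖) * ‖v‖ := by
  refine (convex_closedBall (0 : E) ‖v‖).norm_image_sub_le_of_norm_hasGradient_le
    (fun x _ => hf x) (fun x hx => ?_)
    (Metric.mem_closedBall_self (norm_nonneg v)) (by simp) |>.trans_eq (by rw [sub_zero])
  have hx : ‖x‖ ≤ ‖v‖ := by simpa using hx
  calc ‖f' x‖ ≤ ‖f' 0‖ + ‖f' x - f' 0‖ := norm_le_insert' _ _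
    _ ≤ ‖f' 0‖ + K * ‖v‖ := by
      gcongr
      simpa using (hf' 0 x).trans (by gcongr; simpa using hx)

end Gradient

theorem StrongConvexOn.add {E : Type*} [NormedAddCommGroup E] [NormedSpace ℝ E] {s : Set E}
    {m n : ℝ} {f g : E → ℝ} (hf : StrongConvexOn s m f) (hg : StrongConvexOn s n g) :
    StrongConvexOn s (m + n) (f + g) := by
  have := UniformConvexOn.add hf hg
  unfold StrongConvexOn
  convert this using 2 with r
  simp only [Pi.add_apply]
  ring

section StrongConvexity

variable {E : Type*} [NormedAddCommGroup E] [InnerProductSpace ℝ E]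

theorem strongConvexOn_half_mul_norm_sub_sq (c : ℝ) (y : E) :
    StrongConvexOn univ c (fun v => c / 2 * ‖v - y‖ ^ 2) := by
  rw [strongConvexOn_iff_convex]
  refine ((convexOn_const (c / 2 * ‖y‖ ^ 2) convex_univ).add
    (((-c) • innerₛₗ ℝ y).convexOn convex_univ)).congr fun v _ => ?_
  simp only [Pi.add_apply, LinearMap.smul_apply, innerₛₗ_apply_apply, smul_eq_mul,
    norm_sub_sq_real, real_inner_comm y v]
  ring

theorem strongConvexOn_neg_of_concaveOn_sub {f : E → ℝ} {ρ : ℝ}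
    (hf : ConcaveOn ℝ univ fun v => f v - ρ / 2 * ‖v‖ ^ 2) : StrongConvexOn univ (-ρ) (-f) :=
  UniformConcaveOn.neg <| strongConcaveOn_iff_convex.2 <| by
    simpa only [neg_div, neg_mul, ← sub_eq_add_neg] using hf

theorem strongConvexOn_proxObjective_integrand {f : E → ℝ} {ρ γ s : ℝ}
    (hf : ConcaveOn ℝ univ fun v => f v - ρ / 2 * ‖v‖ ^ 2) (x y : E) :
    StrongConvexOn univ (γ⁻¹ + s⁻¹ - ρ)
      (fun v => ‖v - x‖ ^ 2 / (2 * γ) - f v + ‖v - y‖ ^ 2 / (2 * s)) := by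
  have := ((strongConvexOn_half_mul_norm_sub_sq γ⁻¹ x).add
    (strongConvexOn_neg_of_concaveOn_sub hf)).add (strongConvexOn_half_mul_norm_sub_sq s⁻¹ y)
  convert this using 1
  · ring
  · ext v
    simp only [Pi.add_apply, Pi.neg_apply]
    ring

end StrongConvexity

theorem le_of_forall_mem_Ioo_one_sub_mul_le {b c : ℝ}
    (h : ∀ t ∈ Ioo (0 : ℝ) 1, (1 - t) * c ≤ b) : c ≤ b := by
  have hlim : Tendsto (fun t : ℝ => (1 - t) * c) (𝓝[>] 0) (𝓝 c) := by
    have : Continuous fun t : ℝ => (1 - t) * c := by fun_prop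
    simpa using (this.tendsto 0).mono_left nhdsWithin_le_nhds
  exact le_of_tendsto hlim (eventually_of_mem (Ioo_mem_nhdsGT one_pos) h)

section Integral

variable {Ω E : Type*} [MeasurableSpace Ω] {P : Measure Ω} [NormedAddCommGroup E]

theorem MeasureTheory.MemLp.integrable_norm_sub_sq {A V : Ω → E} (hA : MemLp A 2 P)
    (hV : MemLp V 2 P) : Integrable (fun x => ‖A x - V x‖ ^ 2) P :=
  (memLp_two_iff_integrable_sq_norm (hA.sub hV).1).1 (hA.sub hV)

variable [InnerProductSpace ℝ E]

theorem integral_add_le_of_strongConvexOn_of_isMin {h : Ω → E → ℝ} {m : ℝ}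
    (hconv : ∀ x, StrongConvexOn univ m (h x))
    (hint : ∀ W : Ω → E, MemLp W 2 P → Integrable (fun x => h x (W x)) P)
    {A V : Ω → E} (hA : MemLp A 2 P) (hV : MemLp V 2 P)
    (hmin : IsMinOn (fun W => ∫ x, h x (W x) ∂P) {W | MemLp W 2 P} A) :
    ∫ x, h x (A x) ∂P + m / 2 * ∫ x, ‖A x - V x‖ ^ 2 ∂P ≤ ∫ x, h x (V x) ∂P := by
  set I := ∫ x, ‖A x - V x‖ ^ 2 ∂P
  rw [← le_sub_iff_add_le']
  refine le_of_forall_mem_Ioo_one_sub_mul_le fun t ht => ?_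
  have hW : MemLp (fun x => (1 - t) • A x + t • V x) 2 P :=
    (hA.const_smul (1 - t)).add (hV.const_smul t)
  have hcomb : ∀ x, h x ((1 - t) • A x + t • V x)
      ≤ (1 - t) * h x (A x) + t * h x (V x) - (1 - t) * t * (m / 2 * ‖A x - V x‖ ^ 2) :=
    fun x => (hconv x).2 (mem_univ _) (mem_univ _) (by linarith [ht.2]) ht.1.le (by ring)
  have hupper : ∫ x, h x (A x) ∂P
      ≤ (1 - t) * ∫ x, h x (A x) ∂P + t * ∫ x, h x (V x) ∂P - (1 - t) * t * (m / 2 * I) := by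
    have hA' := (hint A hA).const_mul (1 - t)
    have hV' := (hint V hV).const_mul t
    have hAV := ((hA.integrable_norm_sub_sq hV).const_mul (m / 2)).const_mul ((1 - t) * t)
    refine (isMinOn_iff.1 hmin _ hW).trans
      ((integral_mono (hint _ hW) ((hA'.add hV').sub hAV) hcomb).trans_eq ?_)
    rw [integral_sub' (hA'.add hV') hAV, integral_add' hA' hV', integral_const_mul,
      integral_const_mul, integral_const_mul, integral_const_mul]
  have hscaled : t * ((1 - t) * (m / 2 * I)) ≤ t * (∫ x, h x (V x) ∂P - ∫ x, h x (A x) ∂P) := by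
    linarith
  exact le_of_mul_le_mul_left hscaled ht.1

end Integral

section GradientIntegrability

variable {Ω E : Type*} [MeasurableSpace Ω] {P : Measure Ω} [NormedAddCommGroup E]
  [InnerProductSpace ℝ E] [CompleteSpace E]

theorem MeasureTheory.MemLp.integrable_comp_of_hasGradientAt [IsFiniteMeasure P] {f : E → ℝ}
    {f' : E → E} {K : ℝ} (hK : 0 ≤ K) (hf : ∀ x, HasGradientAt f (f' x) x)
    (hf' : ∀ x y, ‖f' y - f' x‖ ≤ K * ‖y - x‖) {V : Ω → E} (hV : MemLp V 2 P) :
    Integrable (fun x => f (V x)) P := by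
  have hcont : Continuous f := continuous_iff_continuousAt.2 fun v => (hf v).continuousAt
  have hnorm : Integrable (fun x => ‖V x‖) P := (hV.integrable one_le_two).norm
  have hsq : Integrable (fun x => ‖V x‖ ^ 2) P := (memLp_two_iff_integrable_sq_norm hV.1).1 hV
  refine ((integrable_const |f 0|).add ((hnorm.const_mul ‖f' 0‖).add (hsq.const_mul K))).mono'
    (hcont.comp_aestronglyMeasurable hV.1) (ae_of_all _ fun x => ?_)
  have hgrowth := abs_sub_le_of_hasGradientAt_of_lipschitz hK hf hf' (V x)
  have htri := abs_sub_abs_le_abs_sub (f (V x)) (f 0)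
  rw [Real.norm_eq_abs, Pi.add_apply, Pi.add_apply]
  linarith

end GradientIntegrability

theorem integral_sub_le_of_le_mul_norm_sub {Ω E : Type*} [MeasurableSpace Ω] {P : Measure Ω}
    [IsProbabilityMeasure P] [NormedAddCommGroup E] {f : E → ℝ} {L μ : ℝ} (hμ : 0 < μ)
    (hf : ∀ a b, f b - f a ≤ L * ‖b - a‖) {A B : Ω → E}
    (hA : Integrable (fun x => f (A x)) P) (hB : Integrable (fun x => f (B x)) P)
    (hAB : Integrable (fun x => ‖B x - A x‖ ^ 2) P) :
    ∫ x, f (B x) ∂P - ∫ x, f (A x) ∂P ≤ L ^ 2 / (2 * μ) + μ / 2 * ∫ x, ‖B x - A x‖ ^ 2 ∂P := by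
  have hyoung : ∀ r : ℝ, L * r ≤ L ^ 2 / (2 * μ) + μ / 2 * r ^ 2 := fun r => by
    rw [div_add' _ _ _ (by positivity), le_div_iff₀ (by positivity)]
    nlinarith [sq_nonneg (L - μ * r)]
  calc ∫ x, f (B x) ∂P - ∫ x, f (A x) ∂P
      = ∫ x, (f (B x) - f (A x)) ∂P := (integral_sub hB hA).symm
    _ ≤ ∫ x, (L ^ 2 / (2 * μ) + μ / 2 * ‖B x - A x‖ ^ 2) ∂P :=
        integral_mono (hB.sub hA) ((integrable_const _).add (hAB.const_mul _))
          fun x => (hf (A x) (B x)).trans (hyoung _)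
    _ = L ^ 2 / (2 * μ) + μ / 2 * ∫ x, ‖B x - A x‖ ^ 2 ∂P := by
        rw [integral_add (integrable_const _) (hAB.const_mul _), integral_const,
          integral_const_mul, probReal_univ, one_smul]

section ProxObjective

variable {E : Type*} [NormedAddCommGroup E] [MeasurableSpace E]

/-- `H(V, θ) + ‖V - T‖²_{L²(P)} / (2s)` for `f = ℓ(θ, ·)`. -/
noncomputable def proxObjective (P : Measure E) (γ s : ℝ) (f : E → ℝ) (T V : E → E) : ℝ :=
  (∫ x, (‖V x - x‖ ^ 2 / (2 * γ) - f (V x)) ∂P) + (∫ x, ‖V x - T x‖ ^ 2 ∂P) / (2 * s)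

variable {P : Measure E} {γ s : ℝ} {f g : E → ℝ} {T V : E → E}

theorem proxObjective_eq_integral (hid : MemLp (fun x => x) 2 P) (hT : MemLp T 2 P)
    (hV : MemLp V 2 P) (hf : Integrable (fun x => f (V x)) P) :
    proxObjective P γ s f T V
      = ∫ x, (‖V x - x‖ ^ 2 / (2 * γ) - f (V x) + ‖V x - T x‖ ^ 2 / (2 * s)) ∂P := by
  have hH : Integrable (fun x => ‖V x - x‖ ^ 2 / (2 * γ) - f (V x)) P :=
    ((hV.integrable_norm_sub_sq hid).div_const _).sub hf
  rw [proxObjective, ← integral_div, integral_add hH ((hV.integrable_norm_sub_sq hT).div_const _)]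

theorem proxObjective_sub_proxObjective (hid : MemLp (fun x => x) 2 P) (hV : MemLp V 2 P)
    (hf : Integrable (fun x => f (V x)) P) (hg : Integrable (fun x => g (V x)) P) :
    proxObjective P γ s f T V - proxObjective P γ s g T V = ∫ x, (g (V x) - f (V x)) ∂P := by
  have hVx := (hV.integrable_norm_sub_sq hid).div_const (2 * γ)
  have hHf : Integrable (fun x => ‖V x - x‖ ^ 2 / (2 * γ) - f (V x)) P := hVx.sub hf
  have hHg : Integrable (fun x => ‖V x - x‖ ^ 2 / (2 * γ) - g (V x)) P := hVx.sub hg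
  rw [proxObjective, proxObjective, add_sub_add_right_eq_sub, ← integral_sub hHf hHg]
  congr 1 with x
  ring

variable [InnerProductSpace ℝ E] {ρ : ℝ}

theorem proxObjective_add_le_of_isMin (hf : ConcaveOn ℝ univ fun v => f v - ρ / 2 * ‖v‖ ^ 2)
    (hfint : ∀ W : E → E, MemLp W 2 P → Integrable (fun x => f (W x)) P)
    (hid : MemLp (fun x => x) 2 P) (hT : MemLp T 2 P) {A : E → E} (hA : MemLp A 2 P)
    (hV : MemLp V 2 P)
    (hmin : IsMinOn (proxObjective P γ s f T) {W | MemLp W 2 P} A) :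
    proxObjective P γ s f T A + (γ⁻¹ + s⁻¹ - ρ) / 2 * ∫ x, ‖A x - V x‖ ^ 2 ∂P
      ≤ proxObjective P γ s f T V := by
  have hG : ∀ W : E → E, MemLp W 2 P → proxObjective P γ s f T W
      = ∫ x, (‖W x - x‖ ^ 2 / (2 * γ) - f (W x) + ‖W x - T x‖ ^ 2 / (2 * s)) ∂P :=
    fun W hW => proxObjective_eq_integral hid hT hW (hfint W hW)
  rw [hG A hA, hG V hV]
  refine integral_add_le_of_strongConvexOn_of_isMin
    (fun x => strongConvexOn_proxObjective_integrand hf x (T x)) (fun W hW => ?_) hA hV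
    (isMinOn_iff.2 fun W hW => ?_)
  · exact (((hW.integrable_norm_sub_sq hid).div_const _).sub (hfint W hW)).add
      ((hW.integrable_norm_sub_sq hT).div_const _)
  · rw [← hG A hA, ← hG W hW]
    exact isMinOn_iff.1 hmin W hW

theorem sqrt_integral_norm_sub_sq_le_of_isMin_proxObjective [IsProbabilityMeasure P]
    {f₁ f₂ : E → ℝ} {L : ℝ} (hL : 0 ≤ L) (hμ : 0 < γ⁻¹ + s⁻¹ - ρ)
    (hf₁ : ConcaveOn ℝ univ fun v => f₁ v - ρ / 2 * ‖v‖ ^ 2)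
    (hf₂ : ConcaveOn ℝ univ fun v => f₂ v - ρ / 2 * ‖v‖ ^ 2)
    (hf₁int : ∀ W : E → E, MemLp W 2 P → Integrable (fun x => f₁ (W x)) P)
    (hf₂int : ∀ W : E → E, MemLp W 2 P → Integrable (fun x => f₂ (W x)) P)
    (hlip : ∀ a b, (f₂ b - f₁ b) - (f₂ a - f₁ a) ≤ L * ‖b - a‖)
    (hid : MemLp (fun x => x) 2 P) (hT : MemLp T 2 P) {A₁ A₂ : E → E}
    (hA₁ : MemLp A₁ 2 P) (hA₂ : MemLp A₂ 2 P)
    (hmin₁ : IsMinOn (proxObjective P γ s f₁ T) {W | MemLp W 2 P} A₁)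
    (hmin₂ : IsMinOn (proxObjective P γ s f₂ T) {W | MemLp W 2 P} A₂) :
    √(∫ x, ‖A₂ x - A₁ x‖ ^ 2 ∂P) ≤ L / (γ⁻¹ + s⁻¹ - ρ) := by
  set μ := γ⁻¹ + s⁻¹ - ρ
  set I := ∫ x, ‖A₂ x - A₁ x‖ ^ 2 ∂P
  have hgap₁ := proxObjective_add_le_of_isMin hf₁ hf₁int hid hT hA₁ hA₂ hmin₁
  have hgap₂ := proxObjective_add_le_of_isMin hf₂ hf₂int hid hT hA₂ hA₁ hmin₂
  have hsymm : ∫ x, ‖A₁ x - A₂ x‖ ^ 2 ∂P = I := by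
    simp_rw [norm_sub_rev (A₁ _)]
    rfl
  rw [hsymm] at hgap₁
  have hd₁ := proxObjective_sub_proxObjective (T := T) (γ := γ) (s := s) hid hA₁
    (hf₁int A₁ hA₁) (hf₂int A₁ hA₁)
  have hd₂ := proxObjective_sub_proxObjective (T := T) (γ := γ) (s := s) hid hA₂
    (hf₁int A₂ hA₂) (hf₂int A₂ hA₂)
  have hyoung := integral_sub_le_of_le_mul_norm_sub hμ hlip
    ((hf₂int A₁ hA₁).sub (hf₁int A₁ hA₁)) ((hf₂int A₂ hA₂).sub (hf₁int A₂ hA₂))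
    (hA₂.integrable_norm_sub_sq hA₁)
  have hkey : μ / 2 * I * (2 * μ) ≤ L ^ 2 := by
    rw [← le_div_iff₀ (by positivity)]
    linarith
  rw [Real.sqrt_le_left (by positivity), div_pow, le_div_iff₀ (by positivity)]
  linarith

end ProxObjective

theorem proximal_map_lipschitz_in_theta_general
    {d p : ℕ} (P : Measure (EuclideanSpace ℝ (Fin d))) [IsProbabilityMeasure P]
    (hP2 : Integrable (fun x => ‖x‖ ^ 2) P)
    (ℓ : EuclideanSpace ℝ (Fin p) → EuclideanSpace ℝ (Fin d) → ℝ)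
    (gθ : EuclideanSpace ℝ (Fin p) → EuclideanSpace ℝ (Fin d) → EuclideanSpace ℝ (Fin p))
    (gv : EuclideanSpace ℝ (Fin p) → EuclideanSpace ℝ (Fin d) → EuclideanSpace ℝ (Fin d))
    (l₀ γ ρ s : ℝ) (hl₀ : 0 ≤ l₀) (hγ : 0 < γ) (hρ : 0 < ρ)
    (hs0 : 0 < s) (hs1 : s < 1 / ρ)
    (hgv : ∀ θ v, HasGradientAt (fun v' => ℓ θ v') (gv θ v) v)
    (hsmooth : ∀ θ v θ' v',
      Real.sqrt (‖gθ θ' v' - gθ θ v‖ ^ 2 + ‖gv θ' v' - gv θ v‖ ^ 2)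
        ≤ l₀ * Real.sqrt (‖θ' - θ‖ ^ 2 + ‖v' - v‖ ^ 2))
    (hwcv : ∀ θ, ConcaveOn ℝ Set.univ (fun v => ℓ θ v - (ρ / 2) * ‖v‖ ^ 2))
    (Tplus : (EuclideanSpace ℝ (Fin d) → EuclideanSpace ℝ (Fin d)) →
      EuclideanSpace ℝ (Fin p) → (EuclideanSpace ℝ (Fin d) → EuclideanSpace ℝ (Fin d)))
    (hTplusL2 : ∀ T, MemLp T 2 P → ∀ θ, MemLp (Tplus T θ) 2 P)
    (hTplusMin : ∀ T, MemLp T 2 P → ∀ θ, ∀ V, MemLp V 2 P →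
      (∫ x, (‖Tplus T θ x - x‖ ^ 2 / (2 * γ) - ℓ θ (Tplus T θ x)) ∂P)
          + (∫ x, ‖Tplus T θ x - T x‖ ^ 2 ∂P) / (2 * s)
        ≤ (∫ x, (‖V x - x‖ ^ 2 / (2 * γ) - ℓ θ (V x)) ∂P)
          + (∫ x, ‖V x - T x‖ ^ 2 ∂P) / (2 * s))
    :
    ∀ T : EuclideanSpace ℝ (Fin d) → EuclideanSpace ℝ (Fin d), MemLp T 2 P →
      ∀ θ θ' : EuclideanSpace ℝ (Fin p),
        Real.sqrt (∫ x, ‖Tplus T θ' x - Tplus T θ x‖ ^ 2 ∂P)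
          ≤ (s * l₀ / (1 - s * (ρ - γ⁻¹))) * ‖θ' - θ‖ := by
  intro T hT θ θ'
  have hμ : 0 < γ⁻¹ + s⁻¹ - ρ := by
    have : ρ < s⁻¹ := by rwa [lt_inv_comm₀ hρ hs0, ← one_div]
    linarith [inv_pos.2 hγ]
  have hconst : s * l₀ / (1 - s * (ρ - γ⁻¹)) = l₀ / (γ⁻¹ + s⁻¹ - ρ) := by
    rw [show 1 - s * (ρ - γ⁻¹) = s * (γ⁻¹ + s⁻¹ - ρ) by field_simp; ring,
      mul_div_mul_left _ _ hs0.ne']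
  have hgv_v : ∀ ϑ v v', ‖gv ϑ v' - gv ϑ v‖ ≤ l₀ * ‖v' - v‖ := fun ϑ v v' => by
    simpa using (Real.le_sqrt_of_sq_le (le_add_of_nonneg_left (sq_nonneg _))).trans
      (hsmooth ϑ v ϑ v')
  have hgv_θ : ∀ v, ‖gv θ' v - gv θ v‖ ≤ l₀ * ‖θ' - θ‖ := fun v => by
    simpa using (Real.le_sqrt_of_sq_le (le_add_of_nonneg_left (sq_nonneg _))).trans
      (hsmooth θ v θ' v)
  have hint : ∀ ϑ (W : _ → _), MemLp W 2 P → Integrable (fun x => ℓ ϑ (W x)) P :=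
    fun ϑ W hW => hW.integrable_comp_of_hasGradientAt hl₀ (hgv ϑ) (hgv_v ϑ)
  have hlip : ∀ a b, (ℓ θ' b - ℓ θ b) - (ℓ θ' a - ℓ θ a) ≤ l₀ * ‖θ' - θ‖ * ‖b - a‖ :=
    fun a b => (le_abs_self _).trans <| by
      simpa only [Real.norm_eq_abs] using convex_univ.norm_image_sub_le_of_norm_hasGradient_le
        (fun v _ => (hgv θ' v).sub (hgv θ v)) (fun v _ => hgv_θ v) (mem_univ a) (mem_univ b)
  have hid : MemLp (fun x => x) 2 P :=
    (memLp_two_iff_integrable_sq_norm aestronglyMeasurable_id).2 hP2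
  refine (sqrt_integral_norm_sub_sq_le_of_isMin_proxObjective (by positivity) hμ (hwcv θ)
    (hwcv θ') (hint θ) (hint θ') hlip hid hT (hTplusL2 T hT θ) (hTplusL2 T hT θ')
    (isMinOn_iff.2 (hTplusMin T hT θ)) (isMinOn_iff.2 (hTplusMin T hT θ'))).trans_eq ?_
  rw [hconst, div_mul_eq_mul_div]

/-- (Lipschitz dependence of the proximal map on θ.) If `ℓ` is C²,
`l₀`-smooth and ρ-weakly convex–weakly concave, and `0 < s < 1/ρ` (so that
`1 − s(ρ − 1/γ) > 0` and the proximal map `T⁺(T;θ)` is well defined), then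
`‖T⁺(T;θ̃) − T⁺(T;θ)‖_{L²(P)} ≤ (s l₀ / (1 − s(ρ − 1/γ))) ‖θ̃ − θ‖`. -/
theorem proximal_map_lipschitz_in_theta
    {d p : ℕ} (P : Measure (EuclideanSpace ℝ (Fin d))) [IsProbabilityMeasure P]
    (hP2 : Integrable (fun x => ‖x‖ ^ 2) P)
    (ℓ : EuclideanSpace ℝ (Fin p) → EuclideanSpace ℝ (Fin d) → ℝ)
    (gθ : EuclideanSpace ℝ (Fin p) → EuclideanSpace ℝ (Fin d) → EuclideanSpace ℝ (Fin p))
    (gv : EuclideanSpace ℝ (Fin p) → EuclideanSpace ℝ (Fin d) → EuclideanSpace ℝ (Fin d))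
    (l₀ γ ρ s : ℝ) (hl₀ : 0 ≤ l₀) (hγ : 0 < γ) (hρ : 0 < ρ)
    (hs0 : 0 < s) (hs1 : s < 1 / ρ)
    (hgθ : ∀ θ v, HasGradientAt (fun θ' => ℓ θ' v) (gθ θ v) θ)
    (hgv : ∀ θ v, HasGradientAt (fun v' => ℓ θ v') (gv θ v) v)
    (hsmooth : ∀ θ v θ' v',
      Real.sqrt (‖gθ θ' v' - gθ θ v‖ ^ 2 + ‖gv θ' v' - gv θ v‖ ^ 2)
        ≤ l₀ * Real.sqrt (‖θ' - θ‖ ^ 2 + ‖v' - v‖ ^ 2))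
    (hwcv : ∀ θ, ConcaveOn ℝ Set.univ (fun v => ℓ θ v - (ρ / 2) * ‖v‖ ^ 2))
    (hwcθ : ∀ v, ConvexOn ℝ Set.univ (fun θ => ℓ θ v + (ρ / 2) * ‖θ‖ ^ 2))
    (hC2 : ContDiff ℝ 2 (fun q : (EuclideanSpace ℝ (Fin p)) × (EuclideanSpace ℝ (Fin d)) =>
      ℓ q.1 q.2))
    (Tplus : (EuclideanSpace ℝ (Fin d) → EuclideanSpace ℝ (Fin d)) →
      EuclideanSpace ℝ (Fin p) → (EuclideanSpace ℝ (Fin d) → EuclideanSpace ℝ (Fin d)))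
    (hTplusL2 : ∀ T, MemLp T 2 P → ∀ θ, MemLp (Tplus T θ) 2 P)
    (hTplusMin : ∀ T, MemLp T 2 P → ∀ θ, ∀ V, MemLp V 2 P →
      (∫ x, (‖Tplus T θ x - x‖ ^ 2 / (2 * γ) - ℓ θ (Tplus T θ x)) ∂P)
          + (∫ x, ‖Tplus T θ x - T x‖ ^ 2 ∂P) / (2 * s)
        ≤ (∫ x, (‖V x - x‖ ^ 2 / (2 * γ) - ℓ θ (V x)) ∂P)
          + (∫ x, ‖V x - T x‖ ^ 2 ∂P) / (2 * s))
    :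
    ∀ T : EuclideanSpace ℝ (Fin d) → EuclideanSpace ℝ (Fin d), MemLp T 2 P →
      ∀ θ θ' : EuclideanSpace ℝ (Fin p),
        Real.sqrt (∫ x, ‖Tplus T θ' x - Tplus T θ x‖ ^ 2 ∂P)
          ≤ (s * l₀ / (1 - s * (ρ - γ⁻¹))) * ‖θ' - θ‖ :=
  proximal_map_lipschitz_in_theta_general P hP2 ℓ gθ gv l₀ γ ρ s hl₀ hγ hρ hs0 hs1 hgv hsmooth hwcv
    Tplus hTplusL2 hTplusMin
end
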